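/- arXiv:2304.02989 — 10 statements merged into one kernel-verified Lean document; each statement's English description precedes it below -/
import Mathlib

section
/- For any bounded function f : [0,1] → ℝ, its concave envelope cav f (the smallest concave function on [0,1] majorizing f), when restricted to the interval [s₋, s₊] where s₋ = sup{s ∈ [0,p̄] : cav f(s) = f(s)} and s₊ = inf{s ∈ [p̄,1] : cav f(s) = f(s)} (assuming both sets are nonempty and s₋ ≤ s₊), is affine on [s₋, s₊]. -/
open Set

/-- The preimage (within `[0,1]`) of a message under a verifiability structure. -/
def Minv {Msg : Type} (M : ℝ → Set Msg) (m : Msg) : Set ℝ :=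
  {x ∈ Set.Icc (0:ℝ) 1 | m ∈ M x}

/-- The set of lowest-consistent types of a verifiability structure. -/
def LCset {Msg : Type} (M : ℝ → Set Msg) : Set ℝ :=
  {s ∈ Set.Icc (0:ℝ) 1 | ∃ m ∈ M s, s = sInf (Minv M m)}

/-- `M` is an (admissible) verifiability structure: each `M s` is finite and nonempty, and
each preimage of an available message is closed and nonempty. -/
def IsVerif {Msg : Type} (M : ℝ → Set Msg) : Prop :=
  (∀ s ∈ Set.Icc (0:ℝ) 1, (M s).Finite ∧ (M s).Nonempty) ∧
  (∀ s ∈ Set.Icc (0:ℝ) 1, ∀ m ∈ M s, IsClosed (Minv M m) ∧ (Minv M m).Nonempty)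

/-- The concave envelope (smallest concave majorant on `[0,1]`) of `f`, as a pointwise
infimum of concave majorants. -/
noncomputable def cav (f : ℝ → ℝ) (p : ℝ) : ℝ :=
  sInf {y : ℝ | ∃ g : ℝ → ℝ, ConcaveOn ℝ (Set.Icc (0:ℝ) 1) g ∧
    (∀ x ∈ Set.Icc (0:ℝ) 1, f x ≤ g x) ∧ g p = y}

/-- The skepticism-adjusted value function `vm^M(s) = v(max_{m ∈ M s} min M⁻¹(m))`. -/
noncomputable def vminus {Msg : Type} (M : ℝ → Set Msg) (v : ℝ → ℝ) (s : ℝ) : ℝ :=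
  v (sSup ((fun m => sInf (Minv M m)) '' (M s)))

/-- The collection of sets of types from which `s` can separate via a single message. -/
def Ksep {Msg : Type} (M : ℝ → Set Msg) (s : ℝ) : Set (Set ℝ) :=
  {S | ∃ m ∈ M s, S = Set.Icc (0:ℝ) 1 \ Minv M m}

/-- `μ` is a finitely supported probability distribution on `[0,1]` with mean `pbar`. -/
def Feas (pbar : ℝ) (μ : ℝ →₀ ℝ) : Prop :=
  (∀ s, 0 ≤ μ s) ∧ (↑μ.support ⊆ Set.Icc (0:ℝ) 1) ∧
  (∑ s ∈ μ.support, μ s) = 1 ∧ (∑ s ∈ μ.support, μ s * s) = pbar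

/-- The expected value `∫ w dμ` of `w` under the finitely supported measure `μ`. -/
noncomputable def val (w : ℝ → ℝ) (μ : ℝ →₀ ℝ) : ℝ := ∑ s ∈ μ.support, μ s * w s

section Aux

lemma affine_concaveOn (s : Set ℝ) (hs : Convex ℝ s) (a b : ℝ) :
    ConcaveOn ℝ s (fun x => a + b * x) := by
  refine ⟨hs, fun x _ y _ p q hp hq hpq => ?_⟩
  simp only [smul_eq_mul]
  have hq' : q = 1 - p := by linarith
  subst hq'
  exact le_of_eq (by ring)

variable {f : ℝ → ℝ} {C : ℝ}

lemma cav_set_nonempty (hC : ∀ x ∈ Set.Icc (0:ℝ) 1, |f x| ≤ C) (p : ℝ) :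
    {y : ℝ | ∃ g : ℝ → ℝ, ConcaveOn ℝ (Set.Icc (0:ℝ) 1) g ∧
      (∀ x ∈ Set.Icc (0:ℝ) 1, f x ≤ g x) ∧ g p = y}.Nonempty :=
  ⟨C, fun _ => C, concaveOn_const C (convex_Icc 0 1),
    fun x hx => (abs_le.1 (hC x hx)).2, rfl⟩

lemma cav_set_bddBelow (hC : ∀ x ∈ Set.Icc (0:ℝ) 1, |f x| ≤ C) {p : ℝ}
    (hp : p ∈ Set.Icc (0:ℝ) 1) :
    BddBelow {y : ℝ | ∃ g : ℝ → ℝ, ConcaveOn ℝ (Set.Icc (0:ℝ) 1) g ∧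
      (∀ x ∈ Set.Icc (0:ℝ) 1, f x ≤ g x) ∧ g p = y} := by
  refine ⟨-C, fun y hy => ?_⟩
  obtain ⟨g, _, hmaj, rfl⟩ := hy
  have := hmaj p hp
  have := (abs_le.1 (hC p hp)).1
  linarith

lemma le_cav (hC : ∀ x ∈ Set.Icc (0:ℝ) 1, |f x| ≤ C) {p : ℝ}
    (hp : p ∈ Set.Icc (0:ℝ) 1) : f p ≤ cav f p :=
  le_csInf (cav_set_nonempty hC p) (fun y hy => by
    obtain ⟨g, _, hmaj, rfl⟩ := hy; exact hmaj p hp)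

lemma cav_le_majorant (hC : ∀ x ∈ Set.Icc (0:ℝ) 1, |f x| ≤ C) {g : ℝ → ℝ}
    (hg : ConcaveOn ℝ (Set.Icc (0:ℝ) 1) g)
    (hmaj : ∀ x ∈ Set.Icc (0:ℝ) 1, f x ≤ g x) {p : ℝ} (hp : p ∈ Set.Icc (0:ℝ) 1) :
    cav f p ≤ g p :=
  csInf_le (cav_set_bddBelow hC hp) ⟨g, hg, hmaj, rfl⟩

lemma cav_concaveOn (hC : ∀ x ∈ Set.Icc (0:ℝ) 1, |f x| ≤ C) :
    ConcaveOn ℝ (Set.Icc (0:ℝ) 1) (cav f) := by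
  refine ⟨convex_Icc 0 1, fun x hx y hy p q hp hq hpq => ?_⟩
  refine le_csInf (cav_set_nonempty hC _) (fun z hz => ?_)
  obtain ⟨g, hg, hmaj, rfl⟩ := hz
  have h1 : cav f x ≤ g x := cav_le_majorant hC hg hmaj hx
  have h2 : cav f y ≤ g y := cav_le_majorant hC hg hmaj hy
  have h3 := hg.2 hx hy hp hq hpq
  have h4 : p • cav f x ≤ p • g x := smul_le_smul_of_nonneg_left h1 hp
  have h5 : q • cav f y ≤ q • g y := smul_le_smul_of_nonneg_left h2 hq
  calc p • cav f x + q • cav f y ≤ p • g x + q • g y := add_le_add h4 h5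
    _ ≤ g (p • x + q • y) := h3

/-- supporting line at an interior point for a concave function on `[0,1]` -/
lemma exists_supporting_line {c : ℝ → ℝ} (hc : ConcaveOn ℝ (Set.Icc (0:ℝ) 1) c)
    {x0 : ℝ} (hx0 : x0 ∈ Set.Ioo (0:ℝ) 1) :
    ∃ b : ℝ, ∀ x ∈ Set.Icc (0:ℝ) 1, c x ≤ c x0 + b * (x - x0) := by
  obtain ⟨h0, h1⟩ := hx0
  set R : Set ℝ := {r | ∃ v ∈ Set.Ioc x0 (1:ℝ), r = (c v - c x0) / (v - x0)} with hR
  have hne : R.Nonempty := ⟨(c 1 - c x0) / (1 - x0), 1, ⟨h1, le_refl 1⟩, rfl⟩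
  have hbdd : BddAbove R := by
    refine ⟨(c x0 - c 0) / (x0 - 0), fun r hr => ?_⟩
    obtain ⟨v, hv, rfl⟩ := hr
    exact hc.slope_anti_adjacent (by constructor <;> norm_num)
      ⟨by linarith [hv.1], hv.2⟩ h0 hv.1
  refine ⟨sSup R, fun x hx => ?_⟩
  rcases lt_trichotomy x x0 with hlt | heq | hgt
  · have hb : sSup R ≤ (c x0 - c x) / (x0 - x) := by
      refine csSup_le hne (fun r hr => ?_)
      obtain ⟨v, hv, rfl⟩ := hr
      exact hc.slope_anti_adjacent hx ⟨by linarith [hv.1], hv.2⟩ hlt hv.1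
    have hpos : (0:ℝ) < x0 - x := by linarith
    have := (le_div_iff₀ hpos).1 hb
    nlinarith
  · subst heq; simp
  · have hmem : (c x - c x0) / (x - x0) ∈ R := ⟨x, ⟨hgt, hx.2⟩, rfl⟩
    have hb := le_csSup hbdd hmem
    have hpos : (0:ℝ) < x - x0 := by linarith
    have := (div_le_iff₀ hpos).1 hb
    linarith

/-- uniform gap for a negative usc function on a compact set -/
lemma usc_neg_gap {K : Set ℝ} (hK : IsCompact K) {g : ℝ → ℝ}
    (hg : UpperSemicontinuousOn g K) (hneg : ∀ x ∈ K, g x < 0) :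
    ∃ δ > (0:ℝ), ∀ x ∈ K, g x ≤ -δ := by
  rcases K.eq_empty_or_nonempty with hKe | hKne
  · exact ⟨1, one_pos, by simp [hKe]⟩
  have h : ∀ x ∈ K, ∃ U : Set ℝ, IsOpen U ∧ x ∈ U ∧ ∀ z ∈ U ∩ K, g z < g x / 2 := by
    intro x hx
    have hev : ∀ᶠ z in nhdsWithin x K, g z < g x / 2 :=
      hg x hx (g x / 2) (by linarith [hneg x hx])
    rw [Filter.eventually_iff, mem_nhdsWithin] at hev
    obtain ⟨U, hUo, hxU, hU⟩ := hev
    exact ⟨U, hUo, hxU, fun z hz => hU hz⟩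
  choose U hUo hxU hUg using h
  obtain ⟨t, ht⟩ := hK.elim_nhds_subcover' (fun x hx => U x hx)
    (fun x hx => (hUo x hx).mem_nhds (hxU x hx))
  have htne : t.Nonempty := by
    obtain ⟨z0, hz0⟩ := hKne
    have := ht hz0
    simp only [Set.mem_iUnion] at this
    obtain ⟨x, hxt, _⟩ := this
    exact ⟨x, hxt⟩
  refine ⟨t.inf' htne (fun x => -(g x.1 / 2)), ?_, ?_⟩
  · rw [gt_iff_lt, Finset.lt_inf'_iff]
    intro x _
    have := hneg x.1 x.2
    linarith
  · intro z hz
    have := ht hz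
    simp only [Set.mem_iUnion] at this
    obtain ⟨x, hxt, hzU⟩ := this
    have h1 : g z < g x.1 / 2 := hUg x.1 x.2 z ⟨hzU, hz⟩
    have h2 : t.inf' htne (fun x => -(g x.1 / 2)) ≤ -(g x.1 / 2) :=
      Finset.inf'_le _ hxt
    linarith

end Aux

/-- the concave envelope is affine on [sm, sp]. -/
theorem stmt2 (f : ℝ → ℝ) (hb : ∃ C, ∀ x ∈ Set.Icc (0:ℝ) 1, |f x| ≤ C)
    (husc : UpperSemicontinuousOn f (Set.Icc (0:ℝ) 1))
    (pbar : ℝ) (hp : pbar ∈ Set.Icc (0:ℝ) 1) (sm sp : ℝ)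
    (hnem : {s ∈ Set.Icc (0:ℝ) pbar | cav f s = f s}.Nonempty)
    (hnep : {s ∈ Set.Icc pbar 1 | cav f s = f s}.Nonempty)
    (hsm : sm = sSup {s ∈ Set.Icc (0:ℝ) pbar | cav f s = f s})
    (hsp : sp = sInf {s ∈ Set.Icc pbar 1 | cav f s = f s})
    (hle : sm ≤ sp) :
    ∃ a b : ℝ, ∀ x ∈ Set.Icc sm sp, cav f x = a + b * x := by
  obtain ⟨C, hC⟩ := hb
  have hAbdd : BddAbove {s ∈ Set.Icc (0:ℝ) pbar | cav f s = f s} :=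
    ⟨pbar, fun x hx => hx.1.2⟩
  have hBbdd : BddBelow {s ∈ Set.Icc pbar 1 | cav f s = f s} :=
    ⟨pbar, fun x hx => hx.1.1⟩
  have hsm_le : sm ≤ pbar := hsm ▸ csSup_le hnem (fun x hx => hx.1.2)
  have hsm_ge : (0:ℝ) ≤ sm := by
    obtain ⟨x, hx⟩ := hnem
    have h := le_csSup hAbdd hx
    rw [← hsm] at h; linarith [hx.1.1]
  have hsp_ge : pbar ≤ sp := hsp ▸ le_csInf hnep (fun x hx => hx.1.1)
  have hsp_le : sp ≤ 1 := by
    obtain ⟨x, hx⟩ := hnep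
    have h := csInf_le hBbdd hx
    rw [← hsp] at h; linarith [hx.1.2]
  have hnc : ∀ x, sm < x → x < sp → cav f x ≠ f x := by
    intro x h1 h2 hct
    rcases le_total x pbar with hxp | hxp
    · have hxA : x ∈ {s ∈ Set.Icc (0:ℝ) pbar | cav f s = f s} :=
        ⟨⟨by linarith, hxp⟩, hct⟩
      have h := le_csSup hAbdd hxA
      rw [← hsm] at h; linarith
    · have hxB : x ∈ {s ∈ Set.Icc pbar 1 | cav f s = f s} :=
        ⟨⟨hxp, by linarith⟩, hct⟩
      have h := csInf_le hBbdd hxB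
      rw [← hsp] at h; linarith
  rcases eq_or_lt_of_le hle with heq | hlt
  · subst heq
    refine ⟨cav f sm, 0, fun x hx => ?_⟩
    have hx' : x = sm := le_antisymm hx.2 hx.1
    subst hx'; ring
  · obtain ⟨x0, hx0l, hx0r⟩ : ∃ x0, sm < x0 ∧ x0 < sp :=
      ⟨(sm + sp) / 2, by linarith, by linarith⟩
    have hx0I : x0 ∈ Set.Ioo (0:ℝ) 1 := ⟨by linarith, by linarith⟩
    have hx0mem : x0 ∈ Set.Icc (0:ℝ) 1 := ⟨by linarith, by linarith⟩
    obtain ⟨b, hbl⟩ := exists_supporting_line (cav_concaveOn hC) hx0I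
    obtain ⟨A, hA⟩ : ∃ A : ℝ, A = cav f x0 - b * x0 := ⟨_, rfl⟩
    have hAx0 : A + b * x0 = cav f x0 := by rw [hA]; ring
    have hbl' : ∀ x ∈ Set.Icc (0:ℝ) 1, cav f x ≤ A + b * x := by
      intro x hx
      have h1 := hbl x hx
      have h2 : cav f x0 + b * (x - x0) = A + b * x := by rw [hA]; ring
      linarith
    have hfl : ∀ x ∈ Set.Icc (0:ℝ) 1, f x ≤ A + b * x := fun x hx =>
      (le_cav hC hx).trans (hbl' x hx)
    have hct : ∀ z ∈ Set.Icc (0:ℝ) 1, f z = A + b * z → cav f z = f z := by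
      intro z hz he
      have h1 := le_cav hC hz
      have h2 := hbl' z hz
      linarith [he.le, he.ge]
    by_cases hA1 : ∃ z ∈ Set.Icc (0:ℝ) 1, z ≤ sm ∧ f z = A + b * z
    · by_cases hB1 : ∃ z ∈ Set.Icc (0:ℝ) 1, sp ≤ z ∧ f z = A + b * z
      · obtain ⟨z1, hz1I, hz1sm, hz1e⟩ := hA1
        obtain ⟨z2, hz2I, hz2sp, hz2e⟩ := hB1
        have hc1 : cav f z1 = A + b * z1 := by
          have h1 := le_cav hC hz1I
          have h2 := hbl' z1 hz1I
          linarith [hz1e.le, hz1e.ge]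
        have hc2 : cav f z2 = A + b * z2 := by
          have h1 := le_cav hC hz2I
          have h2 := hbl' z2 hz2I
          linarith [hz2e.le, hz2e.ge]
        refine ⟨A, b, fun x hx => ?_⟩
        have hxI : x ∈ Set.Icc (0:ℝ) 1 := ⟨by linarith [hx.1], by linarith [hx.2]⟩
        have hup : cav f x ≤ A + b * x := hbl' x hxI
        have hz12 : z1 < z2 := by linarith [hx.1, hx.2]
        have hne : z2 - z1 ≠ 0 := ne_of_gt (by linarith)
        obtain ⟨p, hpdef⟩ : ∃ p : ℝ, p = (z2 - x) / (z2 - z1) := ⟨_, rfl⟩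
        obtain ⟨q, hqdef⟩ : ∃ q : ℝ, q = (x - z1) / (z2 - z1) := ⟨_, rfl⟩
        have hpn : 0 ≤ p := hpdef ▸ div_nonneg (by linarith [hx.2]) (by linarith)
        have hqn : 0 ≤ q := hqdef ▸ div_nonneg (by linarith [hx.1]) (by linarith)
        have hpq : p + q = 1 := by rw [hpdef, hqdef]; field_simp; ring
        have hxc' : p * z1 + q * z2 = x := by
          rw [hpdef, hqdef]; field_simp; ring
        have hxc : p • z1 + q • z2 = x := by
          simp only [smul_eq_mul]; exact hxc'
        have hlow := (cav_concaveOn hC).2 hz1I hz2I hpn hqn hpq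
        rw [hxc] at hlow
        simp only [smul_eq_mul, hc1, hc2] at hlow
        have hlval : p * (A + b * z1) + q * (A + b * z2) = A + b * x := by
          have : p * (A + b * z1) + q * (A + b * z2)
              = (p + q) * A + b * (p * z1 + q * z2) := by ring
          rw [this, hpq, hxc']; ring
        linarith
      · exfalso
        push_neg at hB1
        obtain ⟨t, ht1, ht2⟩ : ∃ t, sm < t ∧ t < x0 :=
          ⟨(sm + x0) / 2, by linarith, by linarith⟩
        have hKsub : Set.Icc t 1 ⊆ Set.Icc (0:ℝ) 1 :=
          Set.Icc_subset_Icc (by linarith) le_rfl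
        have hlcont : Continuous (fun z : ℝ => -(A + b * z)) := by fun_prop
        have husc' : UpperSemicontinuousOn (fun z => f z + (-(A + b * z)))
            (Set.Icc t 1) :=
          (husc.mono hKsub).add (hlcont.continuousOn.upperSemicontinuousOn)
        have hneg : ∀ z ∈ Set.Icc t 1, f z + (-(A + b * z)) < 0 := by
          intro z hz
          have hzI := hKsub hz
          have hle' := hfl z hzI
          rcases eq_or_lt_of_le hle' with he | hlt'
          · exfalso
            rcases lt_or_ge z sp with hzs | hzs
            · exact hnc z (by linarith [hz.1]) hzs (hct z hzI he)
            · exact hB1 z hzI hzs he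
          · linarith
        obtain ⟨δ, hδ, hgap⟩ := usc_neg_gap isCompact_Icc husc' hneg
        have hconc := (affine_concaveOn (Set.Icc (0:ℝ) 1) (convex_Icc 0 1) A b).inf
          (affine_concaveOn (Set.Icc (0:ℝ) 1) (convex_Icc 0 1) (A + δ * t) (b - δ))
        have hmaj : ∀ x ∈ Set.Icc (0:ℝ) 1,
            f x ≤ ((fun x => A + b * x) ⊓
              (fun x => A + δ * t + (b - δ) * x)) x := by
          intro x hx
          have hflx := hfl x hx
          rw [Pi.inf_apply]
          refine le_min hflx ?_
          rcases le_or_gt t x with htx | htx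
          · have := hgap x ⟨htx, hx.2⟩
            nlinarith [hx.2, hx.1, ht1, hsm_ge]
          · nlinarith [hx.1]
        have hcle := cav_le_majorant hC hconc hmaj hx0mem
        rw [Pi.inf_apply] at hcle
        have h2 : cav f x0 ≤ A + δ * t + (b - δ) * x0 :=
          le_trans hcle (min_le_right _ _)
        nlinarith
    · exfalso
      push_neg at hA1
      obtain ⟨t, ht1, ht2⟩ : ∃ t, x0 < t ∧ t < sp :=
        ⟨(x0 + sp) / 2, by linarith, by linarith⟩
      have hKsub : Set.Icc (0:ℝ) t ⊆ Set.Icc (0:ℝ) 1 :=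
        Set.Icc_subset_Icc le_rfl (by linarith)
      have hlcont : Continuous (fun z : ℝ => -(A + b * z)) := by fun_prop
      have husc' : UpperSemicontinuousOn (fun z => f z + (-(A + b * z)))
          (Set.Icc (0:ℝ) t) :=
        (husc.mono hKsub).add (hlcont.continuousOn.upperSemicontinuousOn)
      have hneg : ∀ z ∈ Set.Icc (0:ℝ) t, f z + (-(A + b * z)) < 0 := by
        intro z hz
        have hzI := hKsub hz
        have hle' := hfl z hzI
        rcases eq_or_lt_of_le hle' with he | hlt'
        · exfalso
          rcases le_or_gt z sm with hzs | hzs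
          · exact hA1 z hzI hzs he
          · exact hnc z hzs (by linarith [hz.2]) (hct z hzI he)
        · linarith
      obtain ⟨δ, hδ, hgap⟩ := usc_neg_gap isCompact_Icc husc' hneg
      have hconc := (affine_concaveOn (Set.Icc (0:ℝ) 1) (convex_Icc 0 1) A b).inf
        (affine_concaveOn (Set.Icc (0:ℝ) 1) (convex_Icc 0 1) (A - δ * t) (b + δ))
      have hmaj : ∀ x ∈ Set.Icc (0:ℝ) 1,
          f x ≤ ((fun x => A + b * x) ⊓
            (fun x => A - δ * t + (b + δ) * x)) x := by
        intro x hx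
        have hflx := hfl x hx
        rw [Pi.inf_apply]
        refine le_min hflx ?_
        rcases le_or_gt x t with htx | htx
        · have := hgap x ⟨hx.1, htx⟩
          nlinarith [hx.1, hx.2, ht2, hsp_le]
        · nlinarith [hx.2]
      have hcle := cav_le_majorant hC hconc hmaj hx0mem
      rw [Pi.inf_apply] at hcle
      have h2 : cav f x0 ≤ A - δ * t + (b + δ) * x0 :=
        le_trans hcle (min_le_right _ _)
      nlinarith
end

section
/- For interval partitions of [0,1] into left-closed intervals, if 𝒫'' is not a refinement of 𝒫', then the lowest-consistent set of M_{𝒫''} does not contain the lowest-consistent set of M_{𝒫'}: there exists s ∈ [0,1] which is the left endpoint of its interval in 𝒫' but not the left endpoint of its interval in 𝒫''. -/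
open Set

/-- A left-closed partition of `[0,1]`: nonempty cells, each containing its infimum,
pairwise disjoint, with union `[0,1]`. -/
def IsLCPartition (C : Set (Set ℝ)) : Prop :=
  (∀ P ∈ C, P.Nonempty ∧ P ⊆ Set.Icc (0:ℝ) 1 ∧ sInf P ∈ P) ∧
  (∀ P ∈ C, ∀ Q ∈ C, P ≠ Q → Disjoint P Q) ∧
  ⋃₀ C = Set.Icc (0:ℝ) 1

/-- The lowest-consistent set of the partitional verifiability structure `M_C`:
types that are the minimum of their cell. -/
def LCpart (C : Set (Set ℝ)) : Set ℝ := {s | ∃ P ∈ C, s ∈ P ∧ s = sInf P}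


/-- for interval partitions, non-refinement means the lowest-consistent
set does not grow: some left endpoint of a cell of C' is not a left endpoint in C''. -/
theorem stmt6 (C' C'' : Set (Set ℝ)) (h' : IsLCPartition C') (h'' : IsLCPartition C'')
    (hint' : ∀ P ∈ C', P.OrdConnected) (hint'' : ∀ P ∈ C'', P.OrdConnected)
    (hnref : ¬ ∀ P ∈ C'', ∃ Q ∈ C', P ⊆ Q) :
    ∃ s ∈ Set.Icc (0:ℝ) 1, s ∈ LCpart C' ∧ s ∉ LCpart C'' := by
  push_neg at hnref
  obtain ⟨P, hP, hPn⟩ := hnref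
  obtain ⟨h1'', h2'', h3''⟩ := h''
  obtain ⟨h1', h2', h3'⟩ := h'
  obtain ⟨hPne, hPsub, _⟩ := h1'' P hP
  obtain ⟨x, hx⟩ := hPne
  have hx01 : x ∈ Icc (0:ℝ) 1 := hPsub hx
  have hxU : x ∈ ⋃₀ C' := h3'.symm ▸ hx01
  obtain ⟨Q1, hQ1, hxQ1⟩ := hxU
  obtain ⟨y, hyP, hyQ1⟩ := not_subset.mp (fun h => hPn Q1 hQ1 h)
  have hy01 : y ∈ Icc (0:ℝ) 1 := hPsub hyP
  have hyU : y ∈ ⋃₀ C' := h3'.symm ▸ hy01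
  obtain ⟨Q2, hQ2, hyQ2⟩ := hyU
  have hQne : Q1 ≠ Q2 := fun h => hyQ1 (h ▸ hyQ2)
  obtain ⟨a, b, Q, haP, hbP, hQ, hbQ, haQ, hab⟩ :
      ∃ a b Q, a ∈ P ∧ b ∈ P ∧ Q ∈ C' ∧ b ∈ Q ∧ a ∉ Q ∧ a < b := by
    rcases lt_trichotomy x y with h|h|h
    · exact ⟨x, y, Q2, hx, hyP, hQ2, hyQ2,
        fun hxQ2 => (h2' Q1 hQ1 Q2 hQ2 hQne).ne_of_mem hxQ1 hxQ2 rfl, h⟩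
    · exact absurd (h ▸ hxQ1) hyQ1
    · exact ⟨y, x, Q1, hyP, hx, hQ1, hxQ1, hyQ1, h⟩
  obtain ⟨hQn, hQsub, hQinf⟩ := h1' Q hQ
  have hbdd : BddBelow Q := ⟨0, fun z hz => (hQsub hz).1⟩
  have hsb : sInf Q ≤ b := csInf_le hbdd hbQ
  have has : a < sInf Q := by
    by_contra h
    push_neg at h
    exact haQ ((hint' Q hQ).out hQinf hbQ ⟨h, hab.le⟩)
  have hsP : sInf Q ∈ P := (hint'' P hP).out haP hbP ⟨has.le, hsb⟩
  refine ⟨sInf Q, hQsub hQinf, ⟨Q, hQ, hQinf, rfl⟩, ?_⟩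
  rintro ⟨P', hP', hsP', hinf⟩
  have hPP : P = P' := by
    by_contra hne
    exact (h2'' P hP P' hP' hne).ne_of_mem hsP hsP' rfl
  have hle : sInf P ≤ a := csInf_le ⟨0, fun z hz => ((h1'' P hP).2.1 hz).1⟩ haP
  rw [hPP] at hle
  exact (hle.trans_lt has).ne hinf.symm
end

section
/- 'More separation possibilities' implies 'larger lowest-consistent set': if for every s ∈ [0,1] the collection K_{M''}(s) contains K_{M'}(s), then L_{M''} ⊇ L_{M'}. -/
open Set

/-- more separation possibilities implies a larger lowest-consistent set. -/
theorem stmt8 {Msg' Msg'' : Type} (M' : ℝ → Set Msg') (M'' : ℝ → Set Msg'')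
    (hV' : IsVerif M') (hV'' : IsVerif M'')
    (hK : ∀ s ∈ Set.Icc (0:ℝ) 1, Ksep M' s ⊆ Ksep M'' s) :
    LCset M' ⊆ LCset M'' := by
  rintro s ⟨hs, m, hm, hmin⟩
  obtain ⟨m'', hm'', heq⟩ := hK s hs ⟨m, hm, rfl⟩
  have hsub : Minv M' m ⊆ Set.Icc (0:ℝ) 1 := fun x hx => hx.1
  have hsub'' : Minv M'' m'' ⊆ Set.Icc (0:ℝ) 1 := fun x hx => hx.1
  have : Minv M' m = Minv M'' m'' := by
    rw [← Set.diff_diff_cancel_left hsub, heq, Set.diff_diff_cancel_left hsub'']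
  exact ⟨hs, m'', hm'', by rw [hmin, this]⟩
end

section
/- The converse fails: there exist verifiability structures M', M'' on [0,1] with L_{M''} ⊇ L_{M'} but K_{M''}(s) ⊉ K_{M'}(s) for some s ∈ [0,1]. -/
open Set

noncomputable def Mp : ℝ → Set ℕ := fun s => if s ≤ 1/2 then {0,1} else {0}
def Mpp : ℝ → Set ℕ := fun _ => {0}

lemma minv_pp : Minv Mpp 0 = Set.Icc (0:ℝ) 1 := by
  ext x; simp [Minv, Mpp]

lemma minv_p0 : Minv Mp 0 = Set.Icc (0:ℝ) 1 := by
  ext x; simp only [Minv, Mp, mem_setOf_eq, mem_Icc]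
  constructor
  · rintro ⟨h, _⟩; exact h
  · intro h; refine ⟨h, ?_⟩; split <;> simp

lemma minv_p1 : Minv Mp 1 = Set.Icc (0:ℝ) (1/2) := by
  ext x; simp only [Minv, Mp, mem_setOf_eq, mem_Icc]
  constructor
  · rintro ⟨⟨h0, h1⟩, hm⟩
    refine ⟨h0, ?_⟩
    by_contra h; push_neg at h
    rw [if_neg (not_le.mpr h)] at hm
    simp at hm
  · rintro ⟨h0, h12⟩
    exact ⟨⟨h0, h12.trans (by norm_num)⟩, by rw [if_pos h12]; simp⟩

lemma mem_mp {s : ℝ} {m : ℕ} (h : m ∈ Mp s) : m = 0 ∨ (m = 1 ∧ s ≤ 1/2) := by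
  unfold Mp at h
  split at h
  · rcases h with h | h
    · exact Or.inl h
    · exact Or.inr ⟨h, by assumption⟩
  · exact Or.inl h

/-- ⪰^lc does not imply ⪰: there are structures with
L_{M''} ⊇ L_{M'} but K_{M''}(s) ⊉ K_{M'}(s) for some s. -/
theorem stmt9 :
    ∃ (M' M'' : ℝ → Set ℕ), IsVerif M' ∧ IsVerif M'' ∧
      LCset M' ⊆ LCset M'' ∧
      ∃ s ∈ Set.Icc (0:ℝ) 1, ¬ Ksep M' s ⊆ Ksep M'' s := by
  refine ⟨Mp, Mpp, ⟨?_, ?_⟩, ⟨?_, ?_⟩, ?_, 0, by norm_num, ?_⟩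
  · intro s _
    constructor <;> unfold Mp <;> split <;> simp
  · intro s _ m hm
    rcases mem_mp hm with h | ⟨h, hs⟩ <;> subst h
    · rw [minv_p0]; exact ⟨isClosed_Icc, ⟨0, by norm_num⟩⟩
    · rw [minv_p1]; exact ⟨isClosed_Icc, ⟨0, by norm_num⟩⟩
  · intro s _; exact ⟨Set.finite_singleton 0, ⟨0, rfl⟩⟩
  · intro s _ m hm
    simp only [Mpp, mem_singleton_iff] at hm; subst hm
    rw [minv_pp]; exact ⟨isClosed_Icc, ⟨0, by norm_num⟩⟩
  · rintro s ⟨hs, m, hm, hsinf⟩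
    have hs0 : s = 0 := by
      rcases mem_mp hm with h | ⟨h, _⟩ <;> subst h
      · rw [minv_p0] at hsinf; rwa [csInf_Icc (by norm_num)] at hsinf
      · rw [minv_p1] at hsinf; rwa [csInf_Icc (by norm_num)] at hsinf
    subst hs0
    exact ⟨hs, 0, rfl, by rw [minv_pp, csInf_Icc (by norm_num)]⟩
  · intro hsub
    have h1 : (Set.Icc (0:ℝ) 1 \ Minv Mp 1) ∈ Ksep Mp 0 := by
      refine ⟨1, ?_, rfl⟩
      unfold Mp; rw [if_pos (by norm_num)]; simp
    have h2 := hsub h1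
    rcases h2 with ⟨m, hm, heq⟩
    simp only [Mpp, mem_singleton_iff] at hm; subst hm
    rw [minv_pp] at heq
    have : (1:ℝ) ∈ Set.Icc (0:ℝ) 1 \ Minv Mp 1 := by
      rw [minv_p1]; constructor
      · norm_num
      · norm_num
    rw [heq] at this
    simp at this
end

section
/- Affine on support: let μ be a finitely-supported probability measure on [0,1] with mean p̄, let s̲ = min supp μ and s̄ = max supp μ with s̲ < p̄ < s̄, and let w : [0,1] → ℝ. Define a, b by w(s̲) = a + b·s̲ and w(s̄) = a + b·s̄. If there exists s ∈ supp μ with w(s) < a + b·s, then there is another finitely-supported probability measure μ' on [0,1] with mean p̄ and ∫ w dμ' > ∫ w dμ. Similarly if w(s) > a + b·s for some s ∈ supp μ. Consequently, if μ maximizes ∫ w dν over finitely-supported probability measures ν on [0,1] with mean p̄, then w(s) = a + b·s for all s ∈ supp μ. -/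
open Set

lemma sum_mul_eq_of_subset (ν : ℝ →₀ ℝ) (A : Finset ℝ) (h : ν.support ⊆ A) (f : ℝ → ℝ) :
    ∑ t ∈ ν.support, ν t * f t = ∑ t ∈ A, ν t * f t := by
  refine Finset.sum_subset h ?_
  intro x _ hx
  simp [Finsupp.notMem_support_iff.mp hx]

lemma sum_single_mul (A : Finset ℝ) (x : ℝ) (hx : x ∈ A) (c : ℝ) (f : ℝ → ℝ) :
    ∑ t ∈ A, (Finsupp.single x c) t * f t = c * f x := by
  rw [Finset.sum_eq_single x]
  · simp
  · intro b _ hb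
    simp [Finsupp.single_apply, Ne.symm hb]
  · intro h; exact absurd hx h

lemma key (w : ℝ → ℝ) (pbar : ℝ) (μ : ℝ →₀ ℝ) (hμ : Feas pbar μ)
    (s₁ s₂ s : ℝ) (h₁ : s₁ ∈ μ.support) (h₂ : s₂ ∈ μ.support) (hs : s ∈ μ.support)
    (hne : s₁ ≠ s₂) (hne1 : s₁ ≠ s) (hne2 : s₂ ≠ s)
    (d₁ d₂ d : ℝ) (hp1 : 0 ≤ μ s₁ + d₁) (hp2 : 0 ≤ μ s₂ + d₂) (hp : 0 ≤ μ s + d)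
    (hsum : d₁ + d₂ + d = 0) (hmean : d₁ * s₁ + d₂ * s₂ + d * s = 0)
    (hval : 0 < d₁ * w s₁ + d₂ * w s₂ + d * w s) :
    ∃ μ', Feas pbar μ' ∧ val w μ < val w μ' := by
  obtain ⟨hnn, hsub, hone, hmn⟩ := hμ
  set μ' : ℝ →₀ ℝ :=
    μ + Finsupp.single s₁ d₁ + Finsupp.single s₂ d₂ + Finsupp.single s d with hμ'
  have happ : ∀ t, μ' t = μ t + (Finsupp.single s₁ d₁) t + (Finsupp.single s₂ d₂) t
      + (Finsupp.single s d) t := by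
    intro t; simp [hμ']
  have hsupp : μ'.support ⊆ μ.support := by
    intro t ht
    by_contra h0
    have h0' : μ t = 0 := Finsupp.notMem_support_iff.mp h0
    have t1 : t ≠ s₁ := by rintro rfl; exact h0 h₁
    have t2 : t ≠ s₂ := by rintro rfl; exact h0 h₂
    have t3 : t ≠ s := by rintro rfl; exact h0 hs
    apply Finsupp.mem_support_iff.mp ht
    rw [happ t, h0', Finsupp.single_apply, Finsupp.single_apply, Finsupp.single_apply,
      if_neg (Ne.symm t1), if_neg (Ne.symm t2), if_neg (Ne.symm t3)]
    ring
  have heval : ∀ f : ℝ → ℝ, ∑ t ∈ μ'.support, μ' t * f t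
      = (∑ t ∈ μ.support, μ t * f t) + (d₁ * f s₁ + d₂ * f s₂ + d * f s) := by
    intro f
    rw [sum_mul_eq_of_subset μ' μ.support hsupp f]
    have : ∀ t ∈ μ.support, μ' t * f t = μ t * f t + (Finsupp.single s₁ d₁) t * f t
        + (Finsupp.single s₂ d₂) t * f t + (Finsupp.single s d) t * f t := by
      intro t _; rw [happ t]; ring
    rw [Finset.sum_congr rfl this]
    simp only [Finset.sum_add_distrib]
    rw [sum_single_mul _ _ h₁, sum_single_mul _ _ h₂, sum_single_mul _ _ hs]
    ring
  refine ⟨μ', ⟨?_, ?_, ?_, ?_⟩, ?_⟩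
  · intro t
    rw [happ t, Finsupp.single_apply, Finsupp.single_apply, Finsupp.single_apply]
    rcases eq_or_ne s₁ t with rfl | t1
    · rw [if_pos rfl, if_neg (Ne.symm hne), if_neg (Ne.symm hne1)]; linarith
    · rcases eq_or_ne s₂ t with rfl | t2
      · rw [if_neg hne, if_pos rfl, if_neg (Ne.symm hne2)]; linarith
      · rcases eq_or_ne s t with rfl | t3
        · rw [if_neg hne1, if_neg hne2, if_pos rfl]; linarith
        · rw [if_neg t1, if_neg t2, if_neg t3]
          simpa using hnn t
  · exact le_trans (Finset.coe_subset.mpr hsupp) hsub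
  · have := heval (fun _ => 1)
    simp only [mul_one] at this
    rw [this, hone]; linarith
  · have := heval id
    simp only [id] at this
    rw [this, hmn]; linarith
  · have := heval w
    rw [val, val, this]
    linarith

/-- at an optimum, w is affine on the support of the signal. -/
theorem stmt13 (w : ℝ → ℝ) (hb : ∃ C, ∀ x ∈ Set.Icc (0:ℝ) 1, |w x| ≤ C)
    (pbar : ℝ) (μ : ℝ →₀ ℝ) (hμ : Feas pbar μ)
    (s₁ s₂ : ℝ) (h₁ : s₁ ∈ μ.support) (h₂ : s₂ ∈ μ.support)
    (hmin : ∀ s ∈ μ.support, s₁ ≤ s) (hmax : ∀ s ∈ μ.support, s ≤ s₂)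
    (hlt₁ : s₁ < pbar) (hlt₂ : pbar < s₂)
    (a b : ℝ) (ha : w s₁ = a + b * s₁) (hbeq : w s₂ = a + b * s₂) :
    ((∃ s ∈ μ.support, w s < a + b * s) →
        ∃ μ' : ℝ →₀ ℝ, Feas pbar μ' ∧ val w μ < val w μ') ∧
    ((∃ s ∈ μ.support, a + b * s < w s) →
        ∃ μ' : ℝ →₀ ℝ, Feas pbar μ' ∧ val w μ < val w μ') ∧
    ((∀ μ' : ℝ →₀ ℝ, Feas pbar μ' → val w μ' ≤ val w μ) →
        ∀ s ∈ μ.support, w s = a + b * s) := by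
  obtain ⟨hnn, hsub, hone, hmn⟩ := hμ
  have hμ' : Feas pbar μ := ⟨hnn, hsub, hone, hmn⟩
  have hne : s₁ ≠ s₂ := ne_of_lt (hlt₁.trans hlt₂)
  have hΔ : (0:ℝ) < s₂ - s₁ := by
    have := hlt₁.trans hlt₂; linarith
  have P1 : (∃ s ∈ μ.support, w s < a + b * s) →
      ∃ μ' : ℝ →₀ ℝ, Feas pbar μ' ∧ val w μ < val w μ' := by
    rintro ⟨s, hs, hws⟩
    have hs1 : s₁ ≠ s := by rintro rfl; linarith
    have hs2 : s₂ ≠ s := by rintro rfl; linarith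
    have hlo : s₁ < s := lt_of_le_of_ne (hmin s hs) hs1
    have hhi : s < s₂ := lt_of_le_of_ne (hmax s hs) (Ne.symm hs2)
    set lam := (s₂ - s) / (s₂ - s₁) with hlam
    have hlam0 : 0 < lam := div_pos (by linarith) hΔ
    have hlam1 : lam < 1 := (div_lt_one hΔ).mpr (by linarith)
    have hc : 0 < μ s := lt_of_le_of_ne (hnn s) (Ne.symm (Finsupp.mem_support_iff.mp hs))
    have hcomb : lam * s₁ + (1 - lam) * s₂ = s := by
      rw [hlam]; field_simp; ring
    refine key w pbar μ hμ' s₁ s₂ s h₁ h₂ hs hne hs1 hs2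
      (μ s * lam) (μ s * (1 - lam)) (-(μ s)) ?_ ?_ (by linarith) (by ring) ?_ ?_
    · have := mul_nonneg hc.le hlam0.le; linarith [hnn s₁]
    · have : 0 ≤ μ s * (1 - lam) := mul_nonneg hc.le (by linarith)
      linarith [hnn s₂]
    · linear_combination (μ s) * hcomb
    · have hval : μ s * lam * w s₁ + μ s * (1 - lam) * w s₂ + (-(μ s)) * w s
          = μ s * (a + b * s - w s) := by
        rw [ha, hbeq]; linear_combination (μ s * b) * hcomb
      rw [hval]
      exact mul_pos hc (by linarith)
  have P2 : (∃ s ∈ μ.support, a + b * s < w s) →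
      ∃ μ' : ℝ →₀ ℝ, Feas pbar μ' ∧ val w μ < val w μ' := by
    rintro ⟨s, hs, hws⟩
    have hs1 : s₁ ≠ s := by rintro rfl; linarith
    have hs2 : s₂ ≠ s := by rintro rfl; linarith
    have hlo : s₁ < s := lt_of_le_of_ne (hmin s hs) hs1
    have hhi : s < s₂ := lt_of_le_of_ne (hmax s hs) (Ne.symm hs2)
    set lam := (s₂ - s) / (s₂ - s₁) with hlam
    have hlam0 : 0 < lam := div_pos (by linarith) hΔ
    have hlam1 : lam < 1 := (div_lt_one hΔ).mpr (by linarith)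
    have hc1 : 0 < μ s₁ := lt_of_le_of_ne (hnn s₁) (Ne.symm (Finsupp.mem_support_iff.mp h₁))
    have hc2 : 0 < μ s₂ := lt_of_le_of_ne (hnn s₂) (Ne.symm (Finsupp.mem_support_iff.mp h₂))
    have hcomb : lam * s₁ + (1 - lam) * s₂ = s := by
      rw [hlam]; field_simp; ring
    set ε := min (μ s₁ / lam) (μ s₂ / (1 - lam)) with hε
    have hε0 : 0 < ε := lt_min (div_pos hc1 hlam0) (div_pos hc2 (by linarith))
    have hεl : ε * lam ≤ μ s₁ := by
      have h1 : ε ≤ μ s₁ / lam := min_le_left _ _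
      calc ε * lam ≤ (μ s₁ / lam) * lam := by nlinarith
        _ = μ s₁ := div_mul_cancel₀ _ (ne_of_gt hlam0)
    have hεr : ε * (1 - lam) ≤ μ s₂ := by
      have h1 : ε ≤ μ s₂ / (1 - lam) := min_le_right _ _
      calc ε * (1 - lam) ≤ (μ s₂ / (1 - lam)) * (1 - lam) := by nlinarith
        _ = μ s₂ := div_mul_cancel₀ _ (by linarith : (1:ℝ) - lam ≠ 0)
    refine key w pbar μ hμ' s₁ s₂ s h₁ h₂ hs hne hs1 hs2
      (-(ε * lam)) (-(ε * (1 - lam))) ε (by linarith) (by linarith) (by linarith [hnn s])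
      (by ring) ?_ ?_
    · linear_combination (-ε) * hcomb
    · have hval : (-(ε * lam)) * w s₁ + (-(ε * (1 - lam))) * w s₂ + ε * w s
          = ε * (w s - (a + b * s)) := by
        rw [ha, hbeq]; linear_combination (-(ε * b)) * hcomb
      rw [hval]
      exact mul_pos hε0 (by linarith)
  refine ⟨P1, P2, ?_⟩
  intro hopt s hs
  by_contra hne'
  rcases lt_or_gt_of_ne hne' with h | h
  · obtain ⟨μ'', hf, hv⟩ := P1 ⟨s, hs, h⟩
    exact absurd (hopt μ'' hf) (not_le.mpr hv)
  · obtain ⟨μ'', hf, hv⟩ := P2 ⟨s, hs, h⟩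
    exact absurd (hopt μ'' hf) (not_le.mpr hv)
end

section
/- Value of Bayesian persuasion: for an upper semi-continuous bounded function w : [0,1] → ℝ and p̄ ∈ [0,1], the supremum of ∫ w dμ over finitely-supported probability measures μ on [0,1] with mean p̄ equals (cav w)(p̄), and the supremum is attained. -/
open Set

/-! ### Auxiliary machinery -/

/-- An upper semicontinuous function on a compact nonempty set attains its maximum. -/
lemma usc_max {α : Type*} [TopologicalSpace α] {K : Set α} {φ : α → ℝ}
    (hK : IsCompact K) (hne : K.Nonempty) (hφ : UpperSemicontinuousOn φ K) :
    ∃ z ∈ K, ∀ z' ∈ K, φ z' ≤ φ z := by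
  classical
  by_contra hcon
  push_neg at hcon
  have key : ∀ x ∈ K, ∃ V : Set α, IsOpen V ∧ x ∈ V ∧ ∃ b ∈ φ '' K, ∀ u ∈ V ∩ K, φ u < b := by
    intro x hx
    obtain ⟨z', hz', hlt⟩ := hcon x hx
    have h2 : ∀ᶠ u in nhdsWithin x K, φ u < φ z' := hφ x hx _ hlt
    rw [eventually_nhdsWithin_iff] at h2
    obtain ⟨V, hV, hVo, hVx⟩ := eventually_nhds_iff.mp h2
    exact ⟨V, hVo, hVx, ⟨φ z', ⟨z', hz', rfl⟩, fun u hu => hV u hu.1 hu.2⟩⟩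
  choose V hVo hVx b hbmem hVb using key
  set U : α → Set α := fun x => if hx : x ∈ K then V x hx else univ with hU
  obtain ⟨t, htK, hcov⟩ := hK.elim_nhds_subcover U (fun x hx => by
    rw [hU]; simp only [hx, dif_pos]; exact (hVo x hx).mem_nhds (hVx x hx))
  have htne : t.Nonempty := by
    obtain ⟨x0, hx0⟩ := hne
    obtain ⟨x, hxt, _⟩ := Set.mem_iUnion₂.mp (hcov hx0)
    exact ⟨x, hxt⟩
  obtain ⟨x0, hx0t, hx0max⟩ := t.exists_max_image (fun x => if hx : x ∈ K then b x hx else 0) htne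
  obtain ⟨z0, hz0K, hz0⟩ := hbmem x0 (htK x0 hx0t)
  obtain ⟨x1, hx1t, hz0mem⟩ := Set.mem_iUnion₂.mp (hcov hz0K)
  have hx1K := htK x1 hx1t
  have h1 : φ z0 < b x1 hx1K := by
    apply hVb x1 hx1K z0 ⟨?_, hz0K⟩
    · simpa only [hU, hx1K, dif_pos] using hz0mem
  have h2 := hx0max x1 hx1t
  simp only [hx1K, htK x0 hx0t, dif_pos] at h2
  rw [hz0] at h1
  exact lt_irrefl _ (lt_of_lt_of_le h1 h2)

/-- Expectation as a linear map. -/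
noncomputable def Lc (h : ℝ → ℝ) : (ℝ →₀ ℝ) →ₗ[ℝ] ℝ := Finsupp.linearCombination ℝ h

lemma Lc_apply (h : ℝ → ℝ) (μ : ℝ →₀ ℝ) : Lc h μ = ∑ s ∈ μ.support, μ s * h s := by
  rw [Lc, Finsupp.linearCombination_apply, Finsupp.sum]; simp [smul_eq_mul]

lemma Lc_single (h : ℝ → ℝ) (a c : ℝ) : Lc h (Finsupp.single a c) = c * h a := by
  rw [Lc, Finsupp.linearCombination_single, smul_eq_mul]

lemma val_eq_Lc (w : ℝ → ℝ) (μ : ℝ →₀ ℝ) : val w μ = Lc w μ := (Lc_apply w μ).symm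

lemma mass_eq_Lc (μ : ℝ →₀ ℝ) : (∑ s ∈ μ.support, μ s) = Lc (fun _ => 1) μ := by
  rw [Lc_apply]; simp

lemma mean_eq_Lc (μ : ℝ →₀ ℝ) : (∑ s ∈ μ.support, μ s * s) = Lc id μ := by
  rw [Lc_apply]; rfl

/-- Jensen: a concave majorant evaluated at the mean dominates the value. -/
lemma jensen_bound (w g : ℝ → ℝ) (p : ℝ) (μ : ℝ →₀ ℝ) (hμ : Feas p μ)
    (hg : ConcaveOn ℝ (Set.Icc (0:ℝ) 1) g) (hmaj : ∀ x ∈ Set.Icc (0:ℝ) 1, w x ≤ g x) :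
    val w μ ≤ g p := by
  obtain ⟨hpos, hsupp, hmass, hmean⟩ := hμ
  have h1 : val w μ ≤ ∑ s ∈ μ.support, μ s * g s := by
    apply Finset.sum_le_sum
    intro s hs
    exact mul_le_mul_of_nonneg_left (hmaj s (hsupp hs)) (hpos s)
  have h2 : (∑ s ∈ μ.support, μ s * g s) ≤ g (∑ s ∈ μ.support, μ s * s) := by
    have := hg.le_map_sum (t := μ.support) (w := fun s => μ s) (p := fun s => s)
      (fun s _ => hpos s) hmass (fun s hs => hsupp hs)
    simpa [smul_eq_mul] using this
  rw [hmean] at h2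
  exact h1.trans h2

lemma val_le_const (w : ℝ → ℝ) {C : ℝ} (hb : ∀ x ∈ Set.Icc (0:ℝ) 1, |w x| ≤ C)
    (p : ℝ) (μ : ℝ →₀ ℝ) (hμ : Feas p μ) : val w μ ≤ C := by
  obtain ⟨hpos, hsupp, hmass, _⟩ := hμ
  calc val w μ ≤ ∑ s ∈ μ.support, μ s * C := by
        apply Finset.sum_le_sum
        intro s hs
        exact mul_le_mul_of_nonneg_left ((abs_le.mp (hb s (hsupp hs))).2) (hpos s)
    _ = C := by rw [← Finset.sum_mul, hmass, one_mul]

lemma feas_single (p : ℝ) (hp : p ∈ Set.Icc (0:ℝ) 1) : Feas p (Finsupp.single p 1) := by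
  refine ⟨fun s => ?_, ?_, ?_, ?_⟩
  · rw [Finsupp.single_apply]; split <;> norm_num
  · rw [Finsupp.support_single_ne_zero _ one_ne_zero]
    simpa using hp
  · rw [Finsupp.support_single_ne_zero _ one_ne_zero]; simp
  · rw [Finsupp.support_single_ne_zero _ one_ne_zero]; simp

lemma val_single (w : ℝ → ℝ) (p : ℝ) : val w (Finsupp.single p 1) = w p := by
  rw [val_eq_Lc, Lc_single, one_mul]

/-- A mixture of feasible distributions is feasible for the mixed mean. -/
lemma feas_mix {p q a b : ℝ} {μ ν : ℝ →₀ ℝ} (hμ : Feas p μ) (hν : Feas q ν)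
    (ha : 0 ≤ a) (hb : 0 ≤ b) (hab : a + b = 1) : Feas (a*p + b*q) (a • μ + b • ν) := by
  obtain ⟨hpos1, hsupp1, hmass1, hmean1⟩ := hμ
  obtain ⟨hpos2, hsupp2, hmass2, hmean2⟩ := hν
  have happ : ∀ s, (a • μ + b • ν) s = a * μ s + b * ν s := fun s => by
    simp [smul_eq_mul]
  refine ⟨fun s => ?_, ?_, ?_, ?_⟩
  · rw [happ]; exact add_nonneg (mul_nonneg ha (hpos1 s)) (mul_nonneg hb (hpos2 s))
  · intro s hs
    simp only [Finset.mem_coe, Finsupp.mem_support_iff, happ] at hs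
    by_cases h1 : μ s = 0
    · by_cases h2 : ν s = 0
      · simp [h1, h2] at hs
      · exact hsupp2 (Finsupp.mem_support_iff.mpr h2)
    · exact hsupp1 (Finsupp.mem_support_iff.mpr h1)
  · rw [mass_eq_Lc]; rw [mass_eq_Lc] at hmass1 hmass2
    simp only [map_add, map_smul, smul_eq_mul, hmass1, hmass2]
    linarith
  · rw [mean_eq_Lc]; rw [mean_eq_Lc] at hmean1 hmean2
    simp only [map_add, map_smul, smul_eq_mul, hmean1, hmean2]

lemma val_mix (w : ℝ → ℝ) (a b : ℝ) (μ ν : ℝ →₀ ℝ) :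
    val w (a • μ + b • ν) = a * val w μ + b * val w ν := by
  simp only [val_eq_Lc, map_add, map_smul, smul_eq_mul]

set_option maxHeartbeats 1000000 in
/-- Carathéodory reduction: any feasible distribution is dominated by one with at most two
support points. -/
lemma reduce (w : ℝ → ℝ) (p : ℝ) : ∀ (n : ℕ) (μ : ℝ →₀ ℝ), μ.support.card ≤ n → Feas p μ →
    ∃ ν, Feas p ν ∧ ν.support.card ≤ 2 ∧ val w μ ≤ val w ν := by
  intro n
  induction n with
  | zero => intro μ h hf; exact ⟨μ, hf, h.trans (by norm_num), le_refl _⟩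
  | succ n IH =>
    intro μ hcard hf
    by_cases hc2 : μ.support.card ≤ 2
    · exact ⟨μ, hf, hc2, le_refl _⟩
    push_neg at hc2
    have hne : μ.support.Nonempty := Finset.card_pos.mp (by omega)
    set a := μ.support.min' hne with ha_def
    set c := μ.support.max' hne with hc_def
    have haS : a ∈ μ.support := μ.support.min'_mem hne
    have hcS : c ∈ μ.support := μ.support.max'_mem hne
    have hbex : ((μ.support.erase c).erase a).Nonempty := by
      apply Finset.card_pos.mp
      have h1 : μ.support.card - 1 ≤ (μ.support.erase c).card := Finset.pred_card_le_card_erase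
      have h2 : (μ.support.erase c).card - 1 ≤ ((μ.support.erase c).erase a).card :=
        Finset.pred_card_le_card_erase
      omega
    obtain ⟨b, hbmem⟩ := hbex
    have hba : b ≠ a := Finset.ne_of_mem_erase hbmem
    have hbc : b ≠ c := Finset.ne_of_mem_erase (Finset.mem_of_mem_erase hbmem)
    have hbS : b ∈ μ.support := Finset.mem_of_mem_erase (Finset.mem_of_mem_erase hbmem)
    have hab : a < b := lt_of_le_of_ne (μ.support.min'_le b hbS) (Ne.symm hba)
    have hbc' : b < c := lt_of_le_of_ne (μ.support.le_max' b hbS) hbc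
    have hac : a < c := hab.trans hbc'
    have hca : (0:ℝ) < c - a := by linarith
    set θ : ℝ := (c - b)/(c - a) with hθ_def
    have hθpos : 0 < θ := div_pos (by linarith) hca
    have hθlt : θ < 1 := (div_lt_one hca).mpr (by linarith)
    have hcomb : θ * a + (1-θ) * c = b := by
      rw [hθ_def]
      field_simp
      ring
    set d : ℝ →₀ ℝ := Finsupp.single b 1 - θ • Finsupp.single a 1 - (1-θ) • Finsupp.single c 1
      with hd_def
    have hLd : ∀ h : ℝ → ℝ, Lc h d = h b - θ * h a - (1-θ) * h c := by
      intro h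
      simp only [hd_def, map_sub, map_smul, Lc_single, smul_eq_mul, one_mul]
    have hdapp : ∀ s, d s = (if b = s then 1 else 0) - θ * (if a = s then 1 else 0)
        - (1-θ) * (if c = s then 1 else 0) := by
      intro s
      simp only [hd_def, Finsupp.sub_apply, Finsupp.smul_apply, Finsupp.single_apply,
        smul_eq_mul, mul_ite, mul_one, mul_zero]
    have hda : d a = -θ := by
      rw [hdapp, if_neg hba, if_pos rfl, if_neg (ne_of_gt hac)]; ring
    have hdb : d b = 1 := by
      rw [hdapp, if_pos rfl, if_neg (ne_of_lt hab), if_neg (ne_of_gt hbc')]; ring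
    have hdc : d c = -(1-θ) := by
      rw [hdapp, if_neg hbc, if_neg (ne_of_lt hac), if_pos rfl]; ring
    have hdother : ∀ s, s ≠ a → s ≠ b → s ≠ c → d s = 0 := by
      intro s h1 h2 h3
      rw [hdapp, if_neg (fun h => h2 h.symm), if_neg (fun h => h1 h.symm),
        if_neg (fun h => h3 h.symm)]; ring
    obtain ⟨hpos, hsupp, hmass, hmean⟩ := hf
    set D : ℝ := w b - θ * w a - (1-θ) * w c with hD_def
    obtain ⟨t, x0, hx0S, htD, hν_nonneg, hνx0⟩ :
        ∃ (t : ℝ) (x0 : ℝ), x0 ∈ μ.support ∧ 0 ≤ t * D ∧ (∀ s, 0 ≤ μ s + t * d s) ∧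
          μ x0 + t * d x0 = 0 := by
      by_cases hD : 0 ≤ D
      · by_cases hmin : μ a / θ ≤ μ c / (1-θ)
        · refine ⟨μ a / θ, a, haS, mul_nonneg (div_nonneg (hpos a) hθpos.le) hD, ?_, ?_⟩
          · intro s
            rcases eq_or_ne s a with h1 | h1
            · rw [h1, hda, mul_neg, div_mul_cancel₀ _ (ne_of_gt hθpos)]; linarith [hpos a]
            rcases eq_or_ne s b with h2 | h2
            · rw [h2, hdb, mul_one]
              have : 0 ≤ μ a / θ := div_nonneg (hpos a) hθpos.le
              linarith [hpos b]
            rcases eq_or_ne s c with h3 | h3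
            · rw [h3, hdc]
              have h4 : μ a / θ * (1-θ) ≤ μ c / (1-θ) * (1-θ) :=
                mul_le_mul_of_nonneg_right hmin (by linarith)
              rw [div_mul_cancel₀] at h4
              · nlinarith
              · linarith
            · rw [hdother s h1 h2 h3]; simpa using hpos s
          · rw [hda, mul_neg, div_mul_cancel₀ _ (ne_of_gt hθpos)]; ring
        · push_neg at hmin
          refine ⟨μ c / (1-θ), c, hcS,
            mul_nonneg (div_nonneg (hpos c) (by linarith)) hD, ?_, ?_⟩
          · intro s
            rcases eq_or_ne s a with h1 | h1
            · rw [h1, hda]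
              have h4 : μ c / (1-θ) * θ ≤ μ a / θ * θ :=
                mul_le_mul_of_nonneg_right hmin.le hθpos.le
              rw [div_mul_cancel₀] at h4
              · nlinarith
              · exact ne_of_gt hθpos
            rcases eq_or_ne s b with h2 | h2
            · rw [h2, hdb, mul_one]
              have : 0 ≤ μ c / (1-θ) := div_nonneg (hpos c) (by linarith)
              linarith [hpos b]
            rcases eq_or_ne s c with h3 | h3
            · rw [h3, hdc, mul_neg, div_mul_cancel₀ _ (by linarith : (1:ℝ)-θ ≠ 0)]
              linarith [hpos c]
            · rw [hdother s h1 h2 h3]; simpa using hpos s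
          · rw [hdc, mul_neg, div_mul_cancel₀ _ (by linarith : (1:ℝ)-θ ≠ 0)]; ring
      · push_neg at hD
        refine ⟨-(μ b), b, hbS, by nlinarith [hpos b], ?_, ?_⟩
        · intro s
          rcases eq_or_ne s a with h1 | h1
          · rw [h1, hda]; nlinarith [hpos a, hpos b]
          rcases eq_or_ne s b with h2 | h2
          · rw [h2, hdb]; simp
          rcases eq_or_ne s c with h3 | h3
          · rw [h3, hdc]; nlinarith [hpos c, hpos b]
          · rw [hdother s h1 h2 h3]; simpa using hpos s
        · rw [hdb]; ring
    set ν : ℝ →₀ ℝ := μ + t • d with hν_def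
    have hνapp : ∀ s, ν s = μ s + t * d s := fun s => by
      rw [hν_def, Finsupp.add_apply, Finsupp.smul_apply, smul_eq_mul]
    have hνsupp : ν.support ⊆ μ.support.erase x0 := by
      intro s hs
      rw [Finsupp.mem_support_iff, hνapp] at hs
      rcases eq_or_ne s x0 with rfl | hsx
      · exact absurd hνx0 hs
      · refine Finset.mem_erase.mpr ⟨hsx, ?_⟩
        by_contra hsS
        rw [Finsupp.notMem_support_iff] at hsS
        have h1 : s ≠ a := by rintro rfl; exact Finsupp.mem_support_iff.mp haS hsS
        have h2 : s ≠ b := by rintro rfl; exact Finsupp.mem_support_iff.mp hbS hsS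
        have h3 : s ≠ c := by rintro rfl; exact Finsupp.mem_support_iff.mp hcS hsS
        rw [hsS, hdother s h1 h2 h3] at hs
        simp at hs
    have hνf : Feas p ν := by
      refine ⟨fun s => by rw [hνapp]; exact hν_nonneg s, ?_, ?_, ?_⟩
      · exact fun s hs => hsupp (Finset.erase_subset _ _ (hνsupp hs))
      · rw [mass_eq_Lc] at hmass ⊢
        rw [hν_def, map_add, map_smul, smul_eq_mul, hLd, hmass]
        ring
      · rw [mean_eq_Lc] at hmean ⊢
        rw [hν_def, map_add, map_smul, smul_eq_mul, hLd, hmean]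
        simp only [id]
        have : b - θ * a - (1-θ) * c = 0 := by rw [← hcomb]; ring
        rw [this]; ring
    have hνcard : ν.support.card ≤ n := by
      have h1 := Finset.card_le_card hνsupp
      rw [Finset.card_erase_of_mem hx0S] at h1
      omega
    have hval : val w μ ≤ val w ν := by
      rw [val_eq_Lc, val_eq_Lc, hν_def, map_add, map_smul, smul_eq_mul, hLd]
      rw [← hD_def]
      linarith
    obtain ⟨ρ, hρf, hρc, hρv⟩ := IH ν hνcard hνf
    exact ⟨ρ, hρf, hρc, hval.trans hρv⟩

/-- The compact parameter set of two-point distributions with mean `pbar`. -/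
def Kset (pbar : ℝ) : Set (ℝ×ℝ×ℝ) := {z | z.1 ∈ Icc (0:ℝ) 1 ∧ z.2.1 ∈ Icc (0:ℝ) 1 ∧
  z.2.2 ∈ Icc (0:ℝ) 1 ∧ z.2.2 * z.1 + (1 - z.2.2) * z.2.1 = pbar}

/-- The objective on two-point distributions. -/
noncomputable def phi (w : ℝ → ℝ) (z : ℝ×ℝ×ℝ) : ℝ := z.2.2 * w z.1 + (1 - z.2.2) * w z.2.1

lemma Kset_compact (pbar : ℝ) : IsCompact (Kset pbar) := by
  have h1 : IsCompact ((Icc (0:ℝ) 1) ×ˢ (Icc (0:ℝ) 1) ×ˢ (Icc (0:ℝ) 1)) :=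
    isCompact_Icc.prod (isCompact_Icc.prod isCompact_Icc)
  have h2 : Kset pbar = ((Icc (0:ℝ) 1) ×ˢ (Icc (0:ℝ) 1) ×ˢ (Icc (0:ℝ) 1)) ∩
      {z : ℝ×ℝ×ℝ | z.2.2 * z.1 + (1 - z.2.2) * z.2.1 = pbar} := by
    ext z; simp only [Kset, Set.mem_inter_iff, Set.mem_prod, Set.mem_setOf_eq]; tauto
  rw [h2]
  exact h1.inter_right (isClosed_eq (by fun_prop) continuous_const)

lemma Kset_nonempty (pbar : ℝ) (hp : pbar ∈ Icc (0:ℝ) 1) : (Kset pbar).Nonempty :=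
  ⟨(pbar, pbar, 1), hp, hp, by norm_num, by ring⟩

lemma phi_usc (w : ℝ → ℝ) (pbar : ℝ) {C : ℝ} (hC : ∀ x ∈ Icc (0:ℝ) 1, |w x| ≤ C)
    (husc : UpperSemicontinuousOn w (Icc (0:ℝ) 1)) :
    UpperSemicontinuousOn (phi w) (Kset pbar) := by
  have hC0 : 0 ≤ C := le_trans (abs_nonneg _) (hC 0 (by norm_num))
  intro z0 hz0 y hy
  obtain ⟨hx0, hy0, ht0, _⟩ := hz0
  set δ : ℝ := min 1 ((y - phi w z0)/(4 + 2*C)) with hδ_def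
  have h42 : (0:ℝ) < 4 + 2*C := by linarith
  have hδpos : 0 < δ := lt_min one_pos (div_pos (by linarith) h42)
  have hδ1 : δ ≤ 1 := min_le_left _ _
  have hδ2 : δ * (4 + 2*C) ≤ y - phi w z0 := by
    rw [← le_div_iff₀ h42]; exact min_le_right _ _
  have hmaps : MapsTo (fun z : ℝ×ℝ×ℝ => z.1) (Kset pbar) (Icc (0:ℝ) 1) := fun z hz => hz.1
  have hmaps2 : MapsTo (fun z : ℝ×ℝ×ℝ => z.2.1) (Kset pbar) (Icc (0:ℝ) 1) := fun z hz => hz.2.1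
  have htd1 : Filter.Tendsto (fun z : ℝ×ℝ×ℝ => z.1) (nhdsWithin z0 (Kset pbar))
      (nhdsWithin z0.1 (Icc (0:ℝ) 1)) :=
    (continuous_fst.continuousWithinAt).tendsto_nhdsWithin hmaps
  have htd2 : Filter.Tendsto (fun z : ℝ×ℝ×ℝ => z.2.1) (nhdsWithin z0 (Kset pbar))
      (nhdsWithin z0.2.1 (Icc (0:ℝ) 1)) :=
    ((continuous_fst.comp continuous_snd).continuousWithinAt).tendsto_nhdsWithin hmaps2
  have e1 : ∀ᶠ z : ℝ×ℝ×ℝ in nhdsWithin z0 (Kset pbar), w z.1 < w z0.1 + δ :=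
    htd1.eventually (husc z0.1 hx0 (w z0.1 + δ) (by linarith))
  have e2 : ∀ᶠ z : ℝ×ℝ×ℝ in nhdsWithin z0 (Kset pbar), w z.2.1 < w z0.2.1 + δ :=
    htd2.eventually (husc z0.2.1 hy0 (w z0.2.1 + δ) (by linarith))
  have htd3 : Filter.Tendsto (fun z : ℝ×ℝ×ℝ => z.2.2) (nhdsWithin z0 (Kset pbar)) (nhds z0.2.2) :=
    ((continuous_snd.comp continuous_snd).tendsto z0).mono_left nhdsWithin_le_nhds
  have e3 : ∀ᶠ z : ℝ×ℝ×ℝ in nhdsWithin z0 (Kset pbar), |z.2.2 - z0.2.2| < δ := by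
    have := Metric.tendsto_nhds.mp htd3 δ hδpos
    simpa [Real.dist_eq] using this
  have e4 : ∀ᶠ z : ℝ×ℝ×ℝ in nhdsWithin z0 (Kset pbar), z ∈ Kset pbar :=
    eventually_mem_nhdsWithin
  filter_upwards [e1, e2, e3, e4] with z h1 h2 h3 hzK
  obtain ⟨hzx, hzy, hzt, _⟩ := hzK
  have habs1 : |w z0.1 + δ| ≤ C + δ :=
    (abs_add_le _ _).trans (by rw [abs_of_pos hδpos]; linarith [hC z0.1 hx0])
  have habs2 : |w z0.2.1 + δ| ≤ C + δ :=
    (abs_add_le _ _).trans (by rw [abs_of_pos hδpos]; linarith [hC z0.2.1 hy0])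
  have hA : z.2.2 * w z.1 ≤ z.2.2 * (w z0.1 + δ) :=
    mul_le_mul_of_nonneg_left h1.le hzt.1
  have hB : (1 - z.2.2) * w z.2.1 ≤ (1 - z.2.2) * (w z0.2.1 + δ) :=
    mul_le_mul_of_nonneg_left h2.le (by linarith [hzt.2])
  have hC1 : z.2.2 * (w z0.1 + δ) ≤ z0.2.2 * (w z0.1 + δ) + δ * (C + δ) := by
    have h5 : (z.2.2 - z0.2.2) * (w z0.1 + δ) ≤ δ * (C + δ) := by
      calc (z.2.2 - z0.2.2) * (w z0.1 + δ) ≤ |(z.2.2 - z0.2.2) * (w z0.1 + δ)| := le_abs_self _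
        _ = |z.2.2 - z0.2.2| * |w z0.1 + δ| := abs_mul _ _
        _ ≤ δ * (C + δ) := mul_le_mul h3.le habs1 (abs_nonneg _) hδpos.le
    linarith
  have hC2 : (1 - z.2.2) * (w z0.2.1 + δ) ≤ (1 - z0.2.2) * (w z0.2.1 + δ) + δ * (C + δ) := by
    have h5 : (z0.2.2 - z.2.2) * (w z0.2.1 + δ) ≤ δ * (C + δ) := by
      calc (z0.2.2 - z.2.2) * (w z0.2.1 + δ) ≤ |(z0.2.2 - z.2.2) * (w z0.2.1 + δ)| := le_abs_self _
        _ = |z0.2.2 - z.2.2| * |w z0.2.1 + δ| := abs_mul _ _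
        _ ≤ δ * (C + δ) := by
            rw [abs_sub_comm]
            exact mul_le_mul h3.le habs2 (abs_nonneg _) hδpos.le
    linarith
  have hCδ : δ * (C + δ) ≤ δ * (C + 1) := mul_le_mul_of_nonneg_left (by linarith) hδpos.le
  have hid : δ * (4 + 2*C) = δ + 2 * (δ * (C + 1)) + δ := by ring
  have hphi : phi w z ≤ phi w z0 + δ + 2 * (δ * (C + 1)) := by
    have heq : z0.2.2 * (w z0.1 + δ) + (1 - z0.2.2) * (w z0.2.1 + δ) = phi w z0 + δ := by
      rw [phi]; ring
    rw [phi]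
    linarith
  linarith

/-- Every point of `Kset` yields a feasible two-point distribution with value `phi`. -/
lemma point_feas (w : ℝ → ℝ) (pbar : ℝ) (z : ℝ×ℝ×ℝ) (hz : z ∈ Kset pbar) :
    ∃ μ, Feas pbar μ ∧ val w μ = phi w z := by
  obtain ⟨hx, hy, ht, hmean⟩ := hz
  refine ⟨z.2.2 • Finsupp.single z.1 1 + (1 - z.2.2) • Finsupp.single z.2.1 1, ?_, ?_⟩
  · have := feas_mix (a := z.2.2) (b := 1 - z.2.2)
      (feas_single z.1 hx) (feas_single z.2.1 hy) ht.1 (by linarith [ht.2]) (by ring)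
    rwa [hmean] at this
  · rw [val_mix, val_single, val_single, phi]

/-- Conversely, every feasible two-point distribution comes from a point of `Kset`. -/
lemma two_point (w : ℝ → ℝ) (pbar : ℝ) (ν : ℝ →₀ ℝ) (hν : Feas pbar ν)
    (hcard : ν.support.card ≤ 2) : ∃ z ∈ Kset pbar, val w ν = phi w z := by
  obtain ⟨hpos, hsupp, hmass, hmean⟩ := hν
  interval_cases h : ν.support.card
  · rw [Finset.card_eq_zero] at h
    rw [h, Finset.sum_empty] at hmass
    norm_num at hmass
  · obtain ⟨x, hx⟩ := Finset.card_eq_one.mp h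
    rw [hx, Finset.sum_singleton] at hmass hmean
    have hxI : x ∈ Icc (0:ℝ) 1 := hsupp (by rw [hx]; exact Finset.mem_singleton_self x)
    refine ⟨(x, x, 1), ⟨hxI, hxI, by norm_num, by rw [← hmean, hmass]; ring⟩, ?_⟩
    rw [val, hx, Finset.sum_singleton, hmass, phi]
    ring
  · obtain ⟨x, y, hxy, hx⟩ := Finset.card_eq_two.mp h
    have hxS : x ∈ ν.support := by rw [hx]; exact Finset.mem_insert_self x {y}
    have hyS : y ∈ ν.support := by rw [hx]; exact Finset.mem_insert_of_mem (Finset.mem_singleton_self y)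
    rw [hx, Finset.sum_pair hxy] at hmass hmean
    have hxI : x ∈ Icc (0:ℝ) 1 := hsupp hxS
    have hyI : y ∈ Icc (0:ℝ) 1 := hsupp hyS
    refine ⟨(x, y, ν x), ⟨hxI, hyI, ⟨hpos x, by linarith [hpos y]⟩, ?_⟩, ?_⟩
    · have : 1 - ν x = ν y := by linarith
      rw [this]; exact hmean
    · rw [val, hx, Finset.sum_pair hxy, phi]
      have : 1 - ν x = ν y := by linarith
      rw [this]

/-- the value of Bayesian persuasion is the concave envelope, attained. -/
theorem stmt14 (w : ℝ → ℝ) (hb : ∃ C, ∀ x ∈ Set.Icc (0:ℝ) 1, |w x| ≤ C)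
    (husc : UpperSemicontinuousOn w (Set.Icc (0:ℝ) 1))
    (pbar : ℝ) (hp : pbar ∈ Set.Icc (0:ℝ) 1) :
    IsGreatest {y : ℝ | ∃ μ : ℝ →₀ ℝ, Feas pbar μ ∧ val w μ = y} (cav w pbar) := by
  obtain ⟨C, hC⟩ := hb
  set S : ℝ → Set ℝ := fun p => {y : ℝ | ∃ μ : ℝ →₀ ℝ, Feas p μ ∧ val w μ = y} with hS_def
  have hSne : ∀ p ∈ Icc (0:ℝ) 1, (S p).Nonempty := fun p hp' =>
    ⟨w p, Finsupp.single p 1, feas_single p hp', val_single w p⟩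
  have hSbdd : ∀ p, BddAbove (S p) := fun p =>
    ⟨C, by rintro y ⟨μ, hμ, rfl⟩; exact val_le_const w hC p μ hμ⟩
  -- the set of majorant values at pbar is nonempty and bounded below
  have hMne : {y : ℝ | ∃ g : ℝ → ℝ, ConcaveOn ℝ (Set.Icc (0:ℝ) 1) g ∧
      (∀ x ∈ Set.Icc (0:ℝ) 1, w x ≤ g x) ∧ g pbar = y}.Nonempty :=
    ⟨C, fun _ => C, concaveOn_const C (convex_Icc 0 1),
      fun x hx => (abs_le.mp (hC x hx)).2, rfl⟩
  have hMbdd : BddBelow {y : ℝ | ∃ g : ℝ → ℝ, ConcaveOn ℝ (Set.Icc (0:ℝ) 1) g ∧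
      (∀ x ∈ Set.Icc (0:ℝ) 1, w x ≤ g x) ∧ g pbar = y} :=
    ⟨w pbar, by rintro y ⟨g, hg, hmaj, rfl⟩; exact hmaj pbar hp⟩
  -- upper-bound half
  have hupper : ∀ y ∈ S pbar, y ≤ cav w pbar := by
    rintro y ⟨μ, hμ, rfl⟩
    apply le_csInf hMne
    rintro z ⟨g, hg, hmaj, rfl⟩
    exact jensen_bound w g pbar μ hμ hg hmaj
  -- the sup function G
  set G : ℝ → ℝ := fun p => sSup (S p) with hG_def
  have hGmaj : ∀ x ∈ Icc (0:ℝ) 1, w x ≤ G x := fun x hx =>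
    le_csSup (hSbdd x) ⟨Finsupp.single x 1, feas_single x hx, val_single w x⟩
  have hGconc : ConcaveOn ℝ (Icc (0:ℝ) 1) G := by
    refine ⟨convex_Icc _ _, ?_⟩
    intro x hx y hy aa bb ha hb' hab
    simp only [smul_eq_mul]
    rcases eq_or_lt_of_le ha with ha0 | ha0
    · have hbb : bb = 1 := by linarith
      rw [← ha0, hbb]; norm_num
    rcases eq_or_lt_of_le hb' with hb0 | hb0
    · have haa : aa = 1 := by linarith
      rw [← hb0, haa]; norm_num
    have hr : aa * x + bb * y ∈ Icc (0:ℝ) 1 := (convex_Icc (0:ℝ) 1) hx hy ha hb' hab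
    have key : ∀ u ∈ S x, ∀ v ∈ S y, aa * u + bb * v ≤ G (aa * x + bb * y) := by
      rintro u ⟨μ, hμ, rfl⟩ v ⟨ν, hν, rfl⟩
      apply le_csSup (hSbdd _)
      exact ⟨aa • μ + bb • ν, feas_mix hμ hν ha hb' hab, val_mix w aa bb μ ν⟩
    have h1 : G x ≤ (G (aa * x + bb * y) - bb * G y) / aa := by
      apply csSup_le (hSne x hx)
      intro u hu
      rw [le_div_iff₀ ha0]
      have h2 : G y ≤ (G (aa * x + bb * y) - aa * u) / bb := by
        apply csSup_le (hSne y hy)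
        intro v hv
        rw [le_div_iff₀ hb0]
        linarith [key u hu v hv]
      rw [le_div_iff₀ hb0] at h2
      linarith
    rw [le_div_iff₀ ha0] at h1
    linarith
  have hcavle : cav w pbar ≤ G pbar :=
    csInf_le hMbdd ⟨G, hGconc, hGmaj, rfl⟩
  -- attained maximum on the two-point parameter set
  obtain ⟨z, hzK, hzmax⟩ := usc_max (Kset_compact pbar) (Kset_nonempty pbar hp)
    (phi_usc w pbar hC husc)
  obtain ⟨μz, hμz, hμzval⟩ := point_feas w pbar z hzK
  have hmA : phi w z ∈ S pbar := ⟨μz, hμz, hμzval⟩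
  have hub : ∀ a ∈ S pbar, a ≤ phi w z := by
    rintro a ⟨μ, hμ, rfl⟩
    obtain ⟨ν, hνf, hνc, hνv⟩ := reduce w pbar μ.support.card μ le_rfl hμ
    obtain ⟨z', hz'K, hz'v⟩ := two_point w pbar ν hνf hνc
    calc val w μ ≤ val w ν := hνv
      _ = phi w z' := hz'v
      _ ≤ phi w z := hzmax z' hz'K
  have hGm : G pbar ≤ phi w z := csSup_le (hSne pbar hp) hub
  have hmain : cav w pbar = phi w z :=
    le_antisymm (hcavle.trans hGm) (hupper _ hmA)
  constructor
  · rw [hmain]; exact hmA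
  · exact hupper
end

section
/- If w₁, w₂ : [0,1] → ℝ are bounded with w₁ ≥ w₂ pointwise, then (cav w₁)(p) ≥ (cav w₂)(p) for every p ∈ [0,1]; moreover if w₁ = w₂ on a finite set S and some probability measure supported on S with mean p̄ attains (cav w₁)(p̄), then (cav w₁)(p̄) = (cav w₂)(p̄). -/
open Set

/-- monotonicity of the concave envelope, and equality when the
optimum is attained on a set where the functions agree. -/
theorem stmt15 (w₁ w₂ : ℝ → ℝ)
    (hb₁ : ∃ C, ∀ x ∈ Set.Icc (0:ℝ) 1, |w₁ x| ≤ C)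
    (hb₂ : ∃ C, ∀ x ∈ Set.Icc (0:ℝ) 1, |w₂ x| ≤ C)
    (hle : ∀ x ∈ Set.Icc (0:ℝ) 1, w₂ x ≤ w₁ x) :
    (∀ p ∈ Set.Icc (0:ℝ) 1, cav w₂ p ≤ cav w₁ p) ∧
    (∀ S : Set ℝ, S.Finite → S ⊆ Set.Icc (0:ℝ) 1 → (∀ x ∈ S, w₁ x = w₂ x) →
      ∀ pbar ∈ Set.Icc (0:ℝ) 1, ∀ μ : ℝ →₀ ℝ, Feas pbar μ → ↑μ.support ⊆ S →
        val w₁ μ = cav w₁ pbar → cav w₁ pbar = cav w₂ pbar) := by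
  have hne : ∀ (w : ℝ → ℝ) (C : ℝ), (∀ x ∈ Set.Icc (0:ℝ) 1, |w x| ≤ C) → ∀ p : ℝ,
      {y : ℝ | ∃ g : ℝ → ℝ, ConcaveOn ℝ (Set.Icc (0:ℝ) 1) g ∧
        (∀ x ∈ Set.Icc (0:ℝ) 1, w x ≤ g x) ∧ g p = y}.Nonempty := by
    intro w C hC p
    exact ⟨C, fun _ => C, concaveOn_const C (convex_Icc 0 1),
      fun x hx => (abs_le.mp (hC x hx)).2, rfl⟩
  have hbdd : ∀ (w : ℝ → ℝ), ∀ p ∈ Set.Icc (0:ℝ) 1, BddBelow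
      {y : ℝ | ∃ g : ℝ → ℝ, ConcaveOn ℝ (Set.Icc (0:ℝ) 1) g ∧
        (∀ x ∈ Set.Icc (0:ℝ) 1, w x ≤ g x) ∧ g p = y} := by
    intro w p hp
    exact ⟨w p, fun y ⟨g, _, hg, hgp⟩ => hgp ▸ hg p hp⟩
  obtain ⟨C₁, hC₁⟩ := hb₁
  obtain ⟨C₂, hC₂⟩ := hb₂
  have mono : ∀ p ∈ Set.Icc (0:ℝ) 1, cav w₂ p ≤ cav w₁ p := by
    intro p hp
    apply csInf_le_csInf (hbdd w₂ p hp) (hne w₁ C₁ hC₁ p)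
    rintro y ⟨g, hgc, hg, hgp⟩
    exact ⟨g, hgc, fun x hx => le_trans (hle x hx) (hg x hx), hgp⟩
  refine ⟨mono, ?_⟩
  intro S _ hSsub heq pbar hpbar μ hfeas hsupp hval
  obtain ⟨hpos, hsub, hsum1, hmean⟩ := hfeas
  have hvaleq : val w₁ μ = val w₂ μ := by
    unfold val
    exact Finset.sum_congr rfl fun s hs => by rw [heq s (hsupp hs)]
  have hkey : val w₁ μ ≤ cav w₂ pbar := by
    rw [hvaleq]
    apply le_csInf (hne w₂ C₂ hC₂ pbar)
    rintro y ⟨g, hgc, hg, hgp⟩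
    have jens : (∑ s ∈ μ.support, μ s • g s) ≤ g (∑ s ∈ μ.support, μ s • s) :=
      hgc.le_map_sum (fun s hs => hpos s) hsum1 (fun s hs => hsub hs)
    have h1 : val w₂ μ ≤ ∑ s ∈ μ.support, μ s • g s := by
      unfold val
      apply Finset.sum_le_sum
      intro s hs
      exact mul_le_mul_of_nonneg_left (hg s (hsub hs)) (hpos s)
    calc val w₂ μ ≤ ∑ s ∈ μ.support, μ s • g s := h1
      _ ≤ g (∑ s ∈ μ.support, μ s • s) := jens
      _ = y := by
        simp only [smul_eq_mul] at *
        rw [hmean, hgp]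
  exact le_antisymm (hval ▸ hkey) (mono pbar hpbar)
end

section
/- Sender-optimal verifiability (sufficiency direction): if every s ∈ [0,1] is lowest-consistent under M, then v₋^M = v, and hence the sender's equilibrium value (cav v₋^M)(p̄) equals the full-commitment Bayesian persuasion value (cav v)(p̄), for every non-decreasing upper semi-continuous bounded v and every prior p̄. -/
open Set

/-- sender-optimal verifiability, sufficiency: if every type is
lowest-consistent, the skepticism-adjusted value equals v and the equilibrium value
equals the full-commitment Bayesian persuasion value. -/
theorem stmt17 {Msg : Type} (M : ℝ → Set Msg) (hV : IsVerif M)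
    (hall : Set.Icc (0:ℝ) 1 ⊆ LCset M)
    (v : ℝ → ℝ) (hmono : MonotoneOn v (Set.Icc (0:ℝ) 1))
    (husc : UpperSemicontinuousOn v (Set.Icc (0:ℝ) 1))
    (hb : ∃ C, ∀ x ∈ Set.Icc (0:ℝ) 1, |v x| ≤ C) :
    (∀ s ∈ Set.Icc (0:ℝ) 1, vminus M v s = v s) ∧
    (∀ pbar ∈ Set.Icc (0:ℝ) 1, cav (vminus M v) pbar = cav v pbar) := by
  have key : ∀ s ∈ Set.Icc (0:ℝ) 1, vminus M v s = v s := by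
    intro s hs
    have hsub : ∀ m, Minv M m ⊆ Set.Icc (0:ℝ) 1 := fun m x hx => hx.1
    have hbdd : ∀ m, BddBelow (Minv M m) := fun m =>
      ⟨0, fun x hx => (hsub m hx).1⟩
    have hle : ∀ m ∈ M s, sInf (Minv M m) ≤ s := by
      intro m hm
      exact csInf_le (hbdd m) ⟨hs, hm⟩
    obtain ⟨-, m₀, hm₀, hm₀eq⟩ := hall hs
    have hmemimg : s ∈ (fun m => sInf (Minv M m)) '' (M s) :=
      ⟨m₀, hm₀, hm₀eq.symm⟩
    have hSup : sSup ((fun m => sInf (Minv M m)) '' (M s)) = s := by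
      apply le_antisymm
      · apply csSup_le ⟨s, hmemimg⟩
        rintro y ⟨m, hm, rfl⟩
        exact hle m hm
      · apply le_csSup _ hmemimg
        exact ⟨s, by rintro y ⟨m, hm, rfl⟩; exact hle m hm⟩
    unfold vminus
    rw [hSup]
  refine ⟨key, fun pbar _ => ?_⟩
  unfold cav
  congr 1
  ext y
  constructor
  · rintro ⟨g, hg, hmaj, rfl⟩
    exact ⟨g, hg, fun x hx => (key x hx) ▸ hmaj x hx, rfl⟩
  · rintro ⟨g, hg, hmaj, rfl⟩
    exact ⟨g, hg, fun x hx => (key x hx).symm ▸ hmaj x hx, rfl⟩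
end

section
/- Receiver-optimal verifiability (sufficiency direction): suppose under M only the types 0 and 1 are lowest-consistent, and let v be non-decreasing, upper semi-continuous and bounded with v(p̄) < v(1) and 1 ∈ L_M. Then the unique optimal Bayes-plausible posterior distribution for the sender's skepticism-adjusted problem is supported on {0,1} with weights 1−p̄ and p̄: formally, for v₋^M as defined, (cav v₋^M)(p̄) = (1−p̄)·v₋^M(0) + p̄·v₋^M(1), and any optimal finitely-supported measure with mean p̄ whose support lies in L_M must be the measure (1−p̄)δ₀ + p̄δ₁ (for p̄ ∈ (0,1)). -/
open Set

/-- receiver-optimal verifiability, sufficiency: if only types 0 and 1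
are lowest-consistent, the sender-optimal posterior distribution is full information. -/
theorem stmt18 {Msg : Type} (M : ℝ → Set Msg) (hV : IsVerif M)
    (hLC : LCset M = {0, 1}) (h1 : (1:ℝ) ∈ LCset M)
    (v : ℝ → ℝ) (hmono : MonotoneOn v (Set.Icc (0:ℝ) 1))
    (husc : UpperSemicontinuousOn v (Set.Icc (0:ℝ) 1))
    (hb : ∃ C, ∀ x ∈ Set.Icc (0:ℝ) 1, |v x| ≤ C)
    (pbar : ℝ) (hp : pbar ∈ Set.Ioo (0:ℝ) 1) (hgain : v pbar < v 1) :
    cav (vminus M v) pbar = (1 - pbar) * vminus M v 0 + pbar * vminus M v 1 ∧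
    (∀ μ : ℝ →₀ ℝ, Feas pbar μ → ↑μ.support ⊆ LCset M →
      val (vminus M v) μ = cav (vminus M v) pbar →
      μ = Finsupp.single 0 (1 - pbar) + Finsupp.single 1 pbar) := by
  obtain ⟨hfin, hcl⟩ := hV
  have hsig : ∀ s ∈ Set.Icc (0:ℝ) 1,
      sSup ((fun m => sInf (Minv M m)) '' (M s)) ∈ LCset M ∧
      sSup ((fun m => sInf (Minv M m)) '' (M s)) ≤ s := by
    intro s hs
    obtain ⟨hMf, hMne⟩ := hfin s hs
    have hTf : ((fun m => sInf (Minv M m)) '' (M s)).Finite := hMf.image _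
    have hTne : ((fun m => sInf (Minv M m)) '' (M s)).Nonempty := hMne.image _
    obtain ⟨m, hm, hms⟩ := hTne.csSup_mem hTf
    obtain ⟨hclo, hne⟩ := hcl s hs m hm
    have hbd : BddBelow (Minv M m) := ⟨0, fun x hx => hx.1.1⟩
    have hinf : sInf (Minv M m) ∈ Minv M m := hclo.csInf_mem hne hbd
    have hle : sInf (Minv M m) ≤ s := csInf_le hbd ⟨hs, hm⟩
    rw [← hms]
    exact ⟨⟨hinf.1, m, hinf.2, rfl⟩, hle⟩
  have hlt : ∀ s ∈ Set.Icc (0:ℝ) 1, s < 1 → vminus M v s = v 0 := by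
    intro s hs hs1
    obtain ⟨hmem, hle⟩ := hsig s hs
    rw [hLC] at hmem
    rcases hmem with h | h
    · unfold vminus; rw [h]
    · exact absurd (h ▸ hle) (not_le.2 hs1)
  have hone : vminus M v 1 = v 1 := by
    have h1' : (1:ℝ) ∈ Set.Icc (0:ℝ) 1 := ⟨zero_le_one, le_refl 1⟩
    obtain ⟨hmem, hle⟩ := hsig 1 h1'
    obtain ⟨_, m, hm, heq⟩ := h1
    obtain ⟨hMf, _⟩ := hfin 1 h1'
    have hTmem : (1:ℝ) ∈ (fun m => sInf (Minv M m)) '' (M 1) := ⟨m, hm, heq.symm⟩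
    have hge : (1:ℝ) ≤ sSup ((fun m => sInf (Minv M m)) '' (M 1)) :=
      le_csSup (hMf.image _).bddAbove hTmem
    unfold vminus
    rw [le_antisymm hle hge]
  have h00 : vminus M v 0 = v 0 := hlt 0 ⟨le_refl 0, zero_le_one⟩ zero_lt_one
  have hv01 : v 0 ≤ v 1 :=
    hmono ⟨le_refl 0, zero_le_one⟩ ⟨zero_le_one, le_refl 1⟩ zero_le_one
  obtain ⟨hp0, hp1⟩ := hp
  -- the affine majorant
  set g : ℝ → ℝ := fun x => (1 - x) * v 0 + x * v 1 with hg
  have hgconc : ConcaveOn ℝ (Set.Icc (0:ℝ) 1) g := by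
    refine ⟨convex_Icc 0 1, ?_⟩
    intro x _ y _ a b ha hb hab
    have hba : b = 1 - a := by linarith
    apply le_of_eq
    simp only [hg, smul_eq_mul, hba]
    ring
  have hgmaj : ∀ x ∈ Set.Icc (0:ℝ) 1, vminus M v x ≤ g x := by
    intro x hx
    rcases eq_or_lt_of_le hx.2 with h | h
    · rw [h, hone]; simp [hg]
    · rw [hlt x hx h]
      simp only [hg]
      nlinarith [hx.1]
  have hLmem : (1 - pbar) * v 0 + pbar * v 1 ∈
      {y : ℝ | ∃ g : ℝ → ℝ, ConcaveOn ℝ (Set.Icc (0:ℝ) 1) g ∧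
        (∀ x ∈ Set.Icc (0:ℝ) 1, vminus M v x ≤ g x) ∧ g pbar = y} :=
    ⟨g, hgconc, hgmaj, rfl⟩
  have hLlb : ∀ y ∈ {y : ℝ | ∃ g : ℝ → ℝ, ConcaveOn ℝ (Set.Icc (0:ℝ) 1) g ∧
        (∀ x ∈ Set.Icc (0:ℝ) 1, vminus M v x ≤ g x) ∧ g pbar = y},
      (1 - pbar) * v 0 + pbar * v 1 ≤ y := by
    rintro y ⟨f, hf, hmaj, rfl⟩
    have hcc := hf.2 ⟨le_refl (0:ℝ), zero_le_one⟩
      ⟨zero_le_one, le_refl (1:ℝ)⟩ (show (0:ℝ) ≤ 1 - pbar by linarith)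
      (le_of_lt hp0) (by ring)
    simp only [smul_eq_mul, mul_zero, mul_one, zero_add] at hcc
    have h0 : vminus M v 0 ≤ f 0 := hmaj 0 ⟨le_refl 0, zero_le_one⟩
    have h1' : vminus M v 1 ≤ f 1 := hmaj 1 ⟨zero_le_one, le_refl 1⟩
    rw [h00] at h0
    rw [hone] at h1'
    nlinarith
  have hcav : cav (vminus M v) pbar = (1 - pbar) * v 0 + pbar * v 1 := by
    unfold cav
    exact le_antisymm (csInf_le ⟨_, hLlb⟩ hLmem) (le_csInf ⟨_, hLmem⟩ hLlb)
  constructor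
  · rw [hcav, h00, hone]
  · intro μ hfeas hsupp _
    obtain ⟨hnn, _, hsum1, hsum2⟩ := hfeas
    rw [hLC] at hsupp
    have hsub : μ.support ⊆ ({0, 1} : Finset ℝ) := by
      intro a ha
      have := hsupp ha
      simp only [Set.mem_insert_iff, Set.mem_singleton_iff] at this
      simp [this]
    have h01 : (0:ℝ) ∉ ({1} : Finset ℝ) := by norm_num
    have hs1 : ∑ s ∈ ({0, 1} : Finset ℝ), μ s = 1 :=
      (Finset.sum_subset hsub (fun x _ hx => Finsupp.notMem_support_iff.1 hx)).symm.trans hsum1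
    have hs2 : ∑ s ∈ ({0, 1} : Finset ℝ), μ s * s = pbar :=
      (Finset.sum_subset hsub (fun x _ hx => by
        rw [Finsupp.notMem_support_iff.1 hx, zero_mul])).symm.trans hsum2
    rw [Finset.sum_insert h01, Finset.sum_singleton] at hs1
    rw [Finset.sum_insert h01, Finset.sum_singleton, mul_zero, mul_one, zero_add] at hs2
    have hμ0 : μ 0 = 1 - pbar := by linarith
    ext a
    by_cases ha0 : a = 0
    · subst ha0
      rw [hμ0, Finsupp.add_apply, Finsupp.single_eq_same, Finsupp.single_apply]
      norm_num
    · by_cases ha1 : a = 1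
      · subst ha1
        rw [hs2, Finsupp.add_apply, Finsupp.single_eq_same, Finsupp.single_apply]
        norm_num
      · have haN : a ∉ μ.support := by
          intro ha
          have := hsupp ha
          simp only [Set.mem_insert_iff, Set.mem_singleton_iff] at this
          tauto
        rw [Finsupp.notMem_support_iff.1 haN, Finsupp.add_apply,
          Finsupp.single_apply, Finsupp.single_apply]
        simp [Ne.symm ha0, Ne.symm ha1]
end

section
/- More verifiability can hurt without PNBP: define v(s) = 0 for s < 2/5, v(s) = 2 for 2/5 ≤ s < 4/5, v(s) = 3 for s ≥ 4/5, and p̄ = 1/2. Let v₋'' be the skepticism-adjusted value for the structure M'' where M''⁻¹(m) = [0,1] for all cheap-talk messages m ∈ M̄ and M''⁻¹(m_H) = [9/10, 1]. Then v₋''(s) = v(0) = 0 for s < 9/10 and v₋''(s) = v(9/10) = 3 for s ≥ 9/10, and (cav v₋'')(1/2) = 5/3 < 2 = v(p̄). -/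
open Set

/-- more verifiability can hurt without PNBP: computation of the
skepticism-adjusted value and its concave envelope for the structure with cheap-talk
messages plus a message proving the type is at least 9/10. -/
theorem stmt19 {Msg : Type} (Mbar : Set Msg) (hfin : Mbar.Finite) (hne : Mbar.Nonempty)
    (mH : Msg) (hmH : mH ∉ Mbar)
    (M'' : ℝ → Set Msg)
    (hM'' : ∀ s, M'' s = Mbar ∪ {m | m = mH ∧ (9:ℝ)/10 ≤ s})
    (v : ℝ → ℝ)
    (hv : ∀ s, v s = if s < 2/5 then 0 else if s < 4/5 then 2 else 3) :
    (∀ s ∈ Set.Icc (0:ℝ) 1, vminus M'' v s = if s < 9/10 then 0 else 3) ∧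
    cav (vminus M'' v) (1/2) = 5/3 ∧
    (5:ℝ)/3 < 2 ∧ v (1/2) = 2 := by
  have hMinvBar : ∀ m ∈ Mbar, Minv M'' m = Set.Icc (0:ℝ) 1 := by
    intro m hm
    ext x
    simp [Minv, hM'', hm]
  have hMinvH : Minv M'' mH = Set.Icc ((9:ℝ)/10) 1 := by
    ext x
    simp only [Minv, hM'', Set.mem_setOf_eq, Set.mem_union, Set.mem_Icc]
    constructor
    · rintro ⟨⟨h0, h1⟩, hmem⟩
      rcases hmem with h | ⟨-, h⟩
      · exact absurd h hmH
      · exact ⟨h, h1⟩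
    · rintro ⟨h9, h1⟩
      exact ⟨⟨by linarith, h1⟩, Or.inr ⟨trivial, h9⟩⟩
  have hInfBar : ∀ m ∈ Mbar, sInf (Minv M'' m) = 0 := by
    intro m hm; rw [hMinvBar m hm, csInf_Icc (by norm_num : (0:ℝ) ≤ 1)]
  have hInfH : sInf (Minv M'' mH) = 9/10 := by
    rw [hMinvH, csInf_Icc (by norm_num : (9:ℝ)/10 ≤ 1)]
  have hvm : ∀ s : ℝ, vminus M'' v s = if s < 9/10 then 0 else 3 := by
    intro s
    unfold vminus
    by_cases hs : s < 9/10
    · have hMs : M'' s = Mbar := by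
        rw [hM'']
        have hemp : {m | m = mH ∧ (9:ℝ)/10 ≤ s} = ∅ := by
          ext m; simp only [Set.mem_setOf_eq, Set.mem_empty_iff_false, iff_false, not_and]
          intro _; linarith
        rw [hemp, Set.union_empty]
      have himg : (fun m => sInf (Minv M'' m)) '' (M'' s) = {0} := by
        rw [hMs]
        apply Set.Subset.antisymm
        · rintro y ⟨m, hm, rfl⟩
          simp [hInfBar m hm]
        · rintro y hy
          obtain ⟨m0, hm0⟩ := hne
          simp only [Set.mem_singleton_iff] at hy
          subst hy
          exact ⟨m0, hm0, hInfBar m0 hm0⟩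
      rw [himg, csSup_singleton, hv, if_pos (by norm_num : (0:ℝ) < 2/5), if_pos hs]
    · have hMs : M'' s = Mbar ∪ {mH} := by
        rw [hM'']
        congr 1
        ext m
        simp [not_lt.mp hs]
      have himg : (fun m => sInf (Minv M'' m)) '' (M'' s) = {0, 9/10} := by
        rw [hMs]
        apply Set.Subset.antisymm
        · rintro y ⟨m, hm, rfl⟩
          rcases hm with hm | hm
          · exact Or.inl (hInfBar m hm)
          · simp only [Set.mem_singleton_iff] at hm
            subst hm
            exact Or.inr hInfH
        · rintro y (rfl | rfl)
          · obtain ⟨m0, hm0⟩ := hne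
            exact ⟨m0, Or.inl hm0, hInfBar m0 hm0⟩
          · exact ⟨mH, Or.inr rfl, hInfH⟩
      rw [himg, csSup_pair]
      have : (0:ℝ) ⊔ (9/10) = 9/10 := by
        rw [sup_eq_right]; norm_num
      rw [this, hv, if_neg (by norm_num), if_neg (by norm_num), if_neg hs]
  refine ⟨fun s _ => hvm s, ?_, by norm_num, by rw [hv]; norm_num⟩
  unfold cav
  have hmem : (5:ℝ)/3 ∈ {y : ℝ | ∃ g : ℝ → ℝ, ConcaveOn ℝ (Set.Icc (0:ℝ) 1) g ∧
      (∀ x ∈ Set.Icc (0:ℝ) 1, vminus M'' v x ≤ g x) ∧ g (1/2) = y} := by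
    refine ⟨fun x => (10/3) * x, ⟨convex_Icc 0 1, ?_⟩, ?_, by norm_num⟩
    · intro x _ y _ a b _ _ _
      simp only [smul_eq_mul]
      apply le_of_eq; ring
    · intro x hx
      obtain ⟨hx0, hx1⟩ := hx
      rw [hvm x]
      split_ifs with h
      · positivity
      · push_neg at h
        linarith
  have hlb : ∀ y ∈ {y : ℝ | ∃ g : ℝ → ℝ, ConcaveOn ℝ (Set.Icc (0:ℝ) 1) g ∧
      (∀ x ∈ Set.Icc (0:ℝ) 1, vminus M'' v x ≤ g x) ∧ g (1/2) = y}, (5:ℝ)/3 ≤ y := by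
    rintro y ⟨g, hg, hmaj, rfl⟩
    have h0 : (0:ℝ) ≤ g 0 := by
      have := hmaj 0 (by norm_num)
      rw [hvm 0] at this
      simpa using this
    have h9 : (3:ℝ) ≤ g (9/10) := by
      have := hmaj (9/10) (by constructor <;> norm_num)
      rw [hvm (9/10)] at this
      simpa using this
    have hconc := hg.2 (Set.mem_Icc.mpr (by norm_num : (0:ℝ) ≤ 0 ∧ (0:ℝ) ≤ 1))
      (Set.mem_Icc.mpr (by constructor <;> norm_num : (0:ℝ) ≤ 9/10 ∧ (9:ℝ)/10 ≤ 1))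
      (by norm_num : (0:ℝ) ≤ 4/9) (by norm_num : (0:ℝ) ≤ 5/9) (by norm_num : (4:ℝ)/9 + 5/9 = 1)
    simp only [smul_eq_mul] at hconc
    have heq : (4:ℝ)/9 * 0 + 5/9 * (9/10) = 1/2 := by norm_num
    rw [heq] at hconc
    linarith
  exact IsLeast.csInf_eq ⟨hmem, hlb⟩
end
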